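/- arXiv:2512.06794 — 2 statements merged into one kernel-verified Lean document; each statement's English description precedes it below -/
import Mathlib

section
/- Assume M is ergodic with unique invariant distribution π_M and set c_* := min_{ℓ∈K} π_M^ℓ. Then there exist a real number V_∞ ≥ 0 and a constant C > 0 such that for every δ with 1 − c_*/2 < δ < 1 one has sup_{ξ ∈ Δ(K)} |V_δ(ξ) − V_∞| ≤ C·(1−δ)·log₂(1/(1−δ)). -/
open scoped BigOperators

noncomputable section

/-- A row-stochastic matrix: nonnegative entries, rows summing to 1. -/
def IsStochastic {K : Type*} [Fintype K] (M : Matrix K K ℝ) : Prop :=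
  (∀ i j, 0 ≤ M i j) ∧ ∀ i, ∑ j, M i j = 1

/-- The total probability `χ(ξ)[i]` of action `i` under belief `ξ` and one-stage
strategy `χ`. -/
def actionProb {K I : Type*} [Fintype K] (ξ : K → ℝ) (χ : K → I → ℝ) (i : I) : ℝ :=
  ∑ ℓ, ξ ℓ * χ ℓ i

/-- The posterior belief `ξ(χ,i)` of Player 2 upon observing action `i`
(junk value when `χ(ξ)[i] = 0`, in which case its weight in the Bellman
equation vanishes). -/
def posterior {K I : Type*} [Fintype K] (ξ : K → ℝ) (χ : K → I → ℝ) (i : I) (ℓ : K) : ℝ :=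
  ξ ℓ * χ ℓ i / actionProb ξ χ i

/-- The one-stage payoff `r(ξ,χ)`: Player 2's best response payoff
`min_j Σ_ℓ ξ^ℓ Σ_i χ^ℓ[i] G^ℓ(i,j)`. -/
def onestagePayoff {K I J : Type*} [Fintype K] [Fintype I] [Fintype J] [Nonempty J]
    (G : K → I → J → ℝ) (ξ : K → ℝ) (χ : K → I → ℝ) : ℝ :=
  ⨅ j : J, ∑ ℓ, ξ ℓ * ∑ i, χ ℓ i * G ℓ i j

/-- `V` is the family of δ-discounted values of the Markov chain game:
for each `δ ∈ [0,1)`, `V δ` is bounded between `0` and `C = ‖G‖∞` on `Δ(K)` and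
satisfies the Bellman equation there. -/
def IsGameValueFamily {K I J : Type*} [Fintype K] [Fintype I] [Fintype J] [Nonempty J]
    (M : Matrix K K ℝ) (G : K → I → J → ℝ) (C : ℝ) (V : ℝ → (K → ℝ) → ℝ) : Prop :=
  ∀ δ ∈ Set.Ico (0 : ℝ) 1,
    (∀ ξ ∈ stdSimplex ℝ K, 0 ≤ V δ ξ ∧ V δ ξ ≤ C) ∧
    ∀ ξ ∈ stdSimplex ℝ K,
      V δ ξ = sSup { x : ℝ | ∃ χ : K → I → ℝ, (∀ ℓ, χ ℓ ∈ stdSimplex ℝ I) ∧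
        x = (1 - δ) * onestagePayoff G ξ χ +
            δ * ∑ i, actionProb ξ χ i * V δ (Matrix.vecMul (posterior ξ χ i) M) }

/-!
Each `V δ` is concave on `Δ(K)`: the Bellman operator multiplies the concavity defect by `δ`,
because the optimal strategies at two beliefs can be merged into one whose posteriors are
mixtures of theirs. Playing non-revealingly gives `δ V_δ(ξ M) ≤ V_δ(ξ)`. By Doeblin's bound,
`ξ M^(N k)` is within `2 (1 - κ)^k` of `π_M`, and a concave nonnegative function loses at most a
fraction `s` of its value at `π_M` at points `s c_*`-close to it; taking
`k ≈ log(1/(1-δ)) / κ` yields `V_δ ≥ V_δ(π_M) - O((1-δ) log(1/(1-δ)))` on `Δ(K)`, and concavity at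
the interior point `π_M` gives the matching upper bound. Finally the `n`-stage undiscounted
value lies within `O(1)` of `[n · min V_δ, n · max V_δ]` for every `δ`, so `min V_δ ≤ max V_δ'`
for all `δ, δ'`: the intervals `V_δ(π_M) ± A (1-δ) log₂(1/(1-δ))` share a point `V_∞`.
-/

open Matrix Finset Filter Topology

theorem IsStochastic.mem_rowStochastic {K : Type*} [Fintype K] [DecidableEq K]
    {M : Matrix K K ℝ} (hM : IsStochastic M) : M ∈ rowStochastic ℝ K :=
  mem_rowStochastic_iff_sum.2 hM

namespace MarkovChainGame

theorem exists_forall_le_le_of_le {ι : Type*} {S : Set ι} {a b : ι → ℝ} {m : ℝ}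
    (hS : S.Nonempty) (hab : ∀ x ∈ S, ∀ y ∈ S, a x ≤ b y) (hm : ∀ x ∈ S, m ≤ b x) :
    ∃ v, m ≤ v ∧ ∀ x ∈ S, a x ≤ v ∧ v ≤ b x := by
  have hbdd : BddBelow (b '' S) := ⟨a hS.some, Set.forall_mem_image.2 (hab _ hS.some_mem)⟩
  exact ⟨sInf (b '' S), le_csInf (hS.image b) (Set.forall_mem_image.2 hm), fun x hx =>
    ⟨le_csInf (hS.image b) (Set.forall_mem_image.2 (hab x hx)), csInf_le hbdd ⟨x, hx, rfl⟩⟩⟩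

section Mixing

variable {K : Type*} [Fintype K] [DecidableEq K]

theorem vecMul_mem_stdSimplex {P : Matrix K K ℝ} (hP : P ∈ rowStochastic ℝ K) {p : K → ℝ}
    (hp : p ∈ stdSimplex ℝ K) : p ᵥ* P ∈ stdSimplex ℝ K := by
  refine ⟨nonneg_vecMul_of_mem_rowStochastic hP hp.1, ?_⟩
  simpa only [dotProduct_one] using
    vecMul_dotProduct_one_eq_one_rowStochastic hP ((dotProduct_one p).trans hp.2)

theorem sum_abs_vecMul_sub_le {P : Matrix K K ℝ} (hP : P ∈ rowStochastic ℝ K) {e : ℝ}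
    (he : ∀ i j, e ≤ P i j) {p q : K → ℝ} (hpq : ∑ ℓ, p ℓ = ∑ ℓ, q ℓ) :
    ∑ j, |(p ᵥ* P) j - (q ᵥ* P) j| ≤ (1 - Fintype.card K * e) * ∑ i, |p i - q i| := by
  have hcentered : ∀ j, (p ᵥ* P) j - (q ᵥ* P) j = ∑ i, (p i - q i) * (P i j - e) := by
    intro j
    have hmass : ∑ i, (p i - q i) * e = 0 := by
      rw [← sum_mul, sum_sub_distrib, hpq, sub_self, zero_mul]
    simp only [mul_sub, sum_sub_distrib, hmass, sub_zero]
    simp only [vecMul, dotProduct, sub_mul, sum_sub_distrib]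
  calc ∑ j, |(p ᵥ* P) j - (q ᵥ* P) j| ≤ ∑ j, ∑ i, |p i - q i| * (P i j - e) := by
        refine sum_le_sum fun j _ => (hcentered j ▸ abs_sum_le_sum_abs _ _).trans_eq ?_
        refine sum_congr rfl fun i _ => ?_
        rw [abs_mul, abs_of_nonneg (sub_nonneg.2 (he i j))]
    _ = ∑ i, |p i - q i| * (1 - Fintype.card K * e) := by
        rw [sum_comm]
        refine sum_congr rfl fun i _ => ?_
        rw [← mul_sum, sum_sub_distrib, sum_row_of_mem_rowStochastic hP, sum_const, card_univ,
          nsmul_eq_mul]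
    _ = (1 - Fintype.card K * e) * ∑ i, |p i - q i| := by rw [← sum_mul, mul_comm]

theorem sum_abs_vecMul_pow_sub_le {P : Matrix K K ℝ} (hP : P ∈ rowStochastic ℝ K) {e : ℝ}
    (he : ∀ i j, e ≤ P i j) (heK : Fintype.card K * e ≤ 1) {π : K → ℝ}
    (hπ : π ∈ stdSimplex ℝ K) (hπP : π ᵥ* P = π) {p : K → ℝ} (hp : p ∈ stdSimplex ℝ K) :
    ∀ k : ℕ, ∑ ℓ, |(p ᵥ* P ^ k) ℓ - π ℓ| ≤ 2 * (1 - Fintype.card K * e) ^ k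
  | 0 => by
    calc ∑ ℓ, |(p ᵥ* P ^ 0) ℓ - π ℓ| ≤ ∑ ℓ, (p ℓ + π ℓ) := by
          refine sum_le_sum fun ℓ _ => ?_
          rw [pow_zero, vecMul_one, abs_le]
          constructor <;> linarith [hp.1 ℓ, hπ.1 ℓ]
      _ = 2 * (1 - Fintype.card K * e) ^ 0 := by rw [sum_add_distrib, hp.2, hπ.2]; norm_num
  | k + 1 => by
    have hpk : p ᵥ* P ^ k ∈ stdSimplex ℝ K := vecMul_mem_stdSimplex (pow_mem hP k) hp
    calc ∑ ℓ, |(p ᵥ* P ^ (k + 1)) ℓ - π ℓ|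
        = ∑ ℓ, |((p ᵥ* P ^ k) ᵥ* P) ℓ - (π ᵥ* P) ℓ| := by
          rw [hπP, pow_succ, vecMul_vecMul]
      _ ≤ (1 - Fintype.card K * e) * ∑ ℓ, |(p ᵥ* P ^ k) ℓ - π ℓ| :=
          sum_abs_vecMul_sub_le hP he (hpk.2.trans hπ.2.symm)
      _ ≤ (1 - Fintype.card K * e) * (2 * (1 - Fintype.card K * e) ^ k) :=
          mul_le_mul_of_nonneg_left (sum_abs_vecMul_pow_sub_le hP he heK hπ hπP hp k)
            (sub_nonneg.2 heK)
      _ = 2 * (1 - Fintype.card K * e) ^ (k + 1) := by ring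

theorem exists_geometric_mixing [Nonempty K] {M : Matrix K K ℝ} (hM : M ∈ rowStochastic ℝ K)
    {N : ℕ} (hN : ∀ i j, 0 < (M ^ N) i j) {π : K → ℝ} (hπ : π ∈ stdSimplex ℝ K)
    (hπM : π ᵥ* M = π) :
    ∃ κ : ℝ, 0 < κ ∧ κ ≤ 1 ∧ ∀ k : ℕ, ∀ p ∈ stdSimplex ℝ K, ∀ ℓ,
      |(p ᵥ* M ^ (N * k)) ℓ - π ℓ| ≤ 2 * (1 - κ) ^ k := by
  obtain ⟨⟨i₀, j₀⟩, hmin⟩ := Finite.exists_min fun ij : K × K => (M ^ N) ij.1 ij.2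
  set e := (M ^ N) i₀ j₀
  have he : ∀ i j, e ≤ (M ^ N) i j := fun i j => hmin (i, j)
  have heK : Fintype.card K * e ≤ 1 := by
    calc Fintype.card K * e = ∑ j, e := by rw [sum_const, card_univ, nsmul_eq_mul]
      _ ≤ ∑ j, (M ^ N) i₀ j := sum_le_sum fun j _ => he i₀ j
      _ = 1 := sum_row_of_mem_rowStochastic (pow_mem hM N) i₀
  have hπMN : ∀ n : ℕ, π ᵥ* M ^ n = π := by
    intro n
    induction n with
    | zero => exact vecMul_one π
    | succ n ih => rw [pow_succ, ← vecMul_vecMul, ih, hπM]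
  refine ⟨Fintype.card K * e, mul_pos (by exact_mod_cast Fintype.card_pos) (hN i₀ j₀), heK,
    fun k p hp ℓ => ?_⟩
  rw [pow_mul]
  exact (single_le_sum (f := fun ℓ => |(p ᵥ* (M ^ N) ^ k) ℓ - π ℓ|) (fun _ _ => abs_nonneg _)
    (mem_univ ℓ)).trans (sum_abs_vecMul_pow_sub_le (pow_mem hM N) he heK hπ (hπMN N) hp k)

end Mixing

section RateArithmetic

theorem one_sub_pow_natCeil_log_le {κ x : ℝ} (hκ : 0 < κ) (hκ1 : κ ≤ 1) (hx : 0 < x) :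
    (1 - κ) ^ ⌈Real.log (1 / x) / κ⌉₊ ≤ x := by
  set k := ⌈Real.log (1 / x) / κ⌉₊
  have hk : Real.log (1 / x) ≤ κ * k := (div_le_iff₀' hκ).1 (Nat.le_ceil _)
  calc (1 - κ) ^ k ≤ Real.exp (-κ) ^ k :=
        pow_le_pow_left₀ (sub_nonneg.2 hκ1) (Real.one_sub_le_exp_neg κ) k
    _ = Real.exp (-(κ * k)) := by rw [← Real.exp_nat_mul]; ring_nf
    _ ≤ Real.exp (-Real.log (1 / x)) := Real.exp_le_exp.2 (neg_le_neg hk)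
    _ = x := by rw [one_div, Real.log_inv, neg_neg, Real.exp_log hx]

theorem mixing_cost_le {κ x c C : ℝ} (N : ℕ) (hκ : 0 < κ) (hx0 : 0 < x) (hx : x ≤ 1 / 2)
    (hc : 0 < c) (hC : 0 ≤ C) :
    (2 * x / c + N * ⌈Real.log (1 / x) / κ⌉₊ * x) * C ≤
      (2 * C / c + N * C * (1 + 1 / κ)) * (x * Real.logb 2 (1 / x)) := by
  set L := Real.logb 2 (1 / x)
  have hlog0 : 0 ≤ Real.log (1 / x) := Real.log_nonneg (one_le_one_div hx0 (by linarith))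
  have hL1 : 1 ≤ L := by
    rw [← Real.logb_self_eq_one one_lt_two]
    exact Real.logb_le_logb_of_le one_lt_two two_pos (by rw [le_div_iff₀ hx0]; linarith)
  have hlogL : Real.log (1 / x) ≤ L :=
    le_div_self hlog0 (Real.log_pos one_lt_two) (Real.log_two_lt_d9.le.trans (by norm_num))
  have hk : (⌈Real.log (1 / x) / κ⌉₊ : ℝ) ≤ (1 + 1 / κ) * L := by
    have hceil := Nat.ceil_lt_add_one (div_nonneg hlog0 hκ.le)
    have hdiv : Real.log (1 / x) / κ ≤ 1 / κ * L := by
      rw [one_div_mul_eq_div]; exact div_le_div_of_nonneg_right hlogL hκ.le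
    linarith
  calc (2 * x / c + N * ⌈Real.log (1 / x) / κ⌉₊ * x) * C
      = 2 * C / c * x + N * C * x * ⌈Real.log (1 / x) / κ⌉₊ := by ring
    _ ≤ 2 * C / c * (x * L) + N * C * x * ((1 + 1 / κ) * L) := by
        gcongr
        exact le_mul_of_one_le_right hx0.le hL1
    _ = (2 * C / c + N * C * (1 + 1 / κ)) * (x * L) := by ring

end RateArithmetic

section ApproximateConcavity

variable {E : Type*} [AddCommGroup E] [Module ℝ E]

def ConcaveOnUpTo (s : Set E) (f : E → ℝ) (D : ℝ) : Prop :=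
  ∀ ⦃x⦄, x ∈ s → ∀ ⦃y⦄, y ∈ s → ∀ ⦃a b : ℝ⦄, 0 ≤ a → 0 ≤ b → a + b = 1 →
    a * f x + b * f y ≤ f (a • x + b • y) + D

theorem ConcaveOnUpTo.nonneg {s : Set E} {f : E → ℝ} {D : ℝ} (h : ConcaveOnUpTo s f D)
    {x : E} (hx : x ∈ s) : 0 ≤ D := by
  simpa using h hx hx le_rfl zero_le_one (zero_add 1)

theorem concaveOn_of_forall_concaveOnUpTo_pow {s : Set E} {f : E → ℝ} {δ D : ℝ}
    (hs : Convex ℝ s) (hδ0 : 0 ≤ δ) (hδ1 : δ < 1) (h : ∀ n : ℕ, ConcaveOnUpTo s f (δ ^ n * D)) :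
    ConcaveOn ℝ s f := by
  refine ⟨hs, fun x hx y hy a b ha hb hab => ?_⟩
  have hlim : Tendsto (fun n => f (a • x + b • y) + δ ^ n * D) atTop (𝓝 (f (a • x + b • y))) := by
    simpa using tendsto_const_nhds.add
      ((tendsto_pow_atTop_nhds_zero_of_lt_one hδ0 hδ1).mul_const D)
  exact ge_of_tendsto' hlim fun n => h n hx hy ha hb hab

end ApproximateConcavity

section Perspective

variable {K : Type*} [Fintype K]

theorem inv_sum_smul_mem_stdSimplex {u : K → ℝ} (hu : 0 ≤ u) (hs : ∑ ℓ, u ℓ ≠ 0) :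
    (∑ ℓ, u ℓ)⁻¹ • u ∈ stdSimplex ℝ K :=
  ⟨fun ℓ => mul_nonneg (inv_nonneg.2 (sum_nonneg fun ℓ _ => hu ℓ)) (hu ℓ), by
    simp only [Pi.smul_apply, smul_eq_mul, ← mul_sum, inv_mul_cancel₀ hs]⟩

theorem exists_mem_stdSimplex_smul_eq [Nonempty K] {u : K → ℝ} (hu : 0 ≤ u) :
    ∃ σ ∈ stdSimplex ℝ K, u = (∑ ℓ, u ℓ) • σ := by
  classical
  rcases (sum_nonneg fun ℓ _ => hu ℓ).eq_or_lt with h0 | hpos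
  · refine ⟨Pi.single (Classical.arbitrary K) 1, single_mem_stdSimplex ℝ _, ?_⟩
    rw [← h0, zero_smul]
    exact (Fintype.sum_eq_zero_iff_of_nonneg hu).1 h0.symm
  · exact ⟨_, inv_sum_smul_mem_stdSimplex hu hpos.ne', by
      rw [smul_smul, mul_inv_cancel₀ hpos.ne', one_smul]⟩

/-- For `u ≥ 0` with `∑ u = 0` this is `0`, the perspective's value at `u = 0`, so no case split
is needed. -/
def perspective (W : (K → ℝ) → ℝ) (u : K → ℝ) : ℝ :=
  (∑ ℓ, u ℓ) * W ((∑ ℓ, u ℓ)⁻¹ • u)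

variable {W : (K → ℝ) → ℝ}

theorem perspective_of_sum_eq_one {u : K → ℝ} (hu : ∑ ℓ, u ℓ = 1) : perspective W u = W u := by
  simp [perspective, hu]

theorem perspective_smul (u : K → ℝ) {a : ℝ} (ha : 0 ≤ a) :
    perspective W (a • u) = a * perspective W u := by
  rcases ha.eq_or_lt with rfl | ha
  · simp [perspective]
  · simp only [perspective, Pi.smul_apply, smul_eq_mul, ← mul_sum, smul_smul,
      _root_.mul_inv_rev, inv_mul_cancel_right₀ ha.ne']
    ring

theorem perspective_mono {W' : (K → ℝ) → ℝ} (h : ∀ ζ ∈ stdSimplex ℝ K, W ζ ≤ W' ζ)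
    {u : K → ℝ} (hu : 0 ≤ u) : perspective W u ≤ perspective W' u := by
  have hs : 0 ≤ ∑ ℓ, u ℓ := sum_nonneg fun ℓ _ => hu ℓ
  rcases hs.eq_or_lt with h0 | hpos
  · simp [perspective, ← h0]
  · exact mul_le_mul_of_nonneg_left (h _ (inv_sum_smul_mem_stdSimplex hu hpos.ne')) hpos.le

theorem perspective_add_le {D : ℝ} (hW : ConcaveOnUpTo (stdSimplex ℝ K) W D) (hD : 0 ≤ D)
    {u v : K → ℝ} (hu : 0 ≤ u) (hv : 0 ≤ v) :
    perspective W u + perspective W v ≤ perspective W (u + v) + (∑ ℓ, (u + v) ℓ) * D := by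
  have hsum : ∑ ℓ, (u + v) ℓ = ∑ ℓ, u ℓ + ∑ ℓ, v ℓ := sum_add_distrib
  rcases (sum_nonneg fun ℓ _ => hu ℓ).eq_or_lt with hu0 | hupos
  · obtain rfl : u = 0 := (Fintype.sum_eq_zero_iff_of_nonneg hu).1 hu0.symm
    simpa [perspective] using mul_nonneg (sum_nonneg fun ℓ _ => hv ℓ) hD
  rcases (sum_nonneg fun ℓ _ => hv ℓ).eq_or_lt with hv0 | hvpos
  · obtain rfl : v = 0 := (Fintype.sum_eq_zero_iff_of_nonneg hv).1 hv0.symm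
    simpa [perspective] using mul_nonneg (sum_nonneg fun ℓ _ => hu ℓ) hD
  set su := ∑ ℓ, u ℓ
  set sv := ∑ ℓ, v ℓ
  have hs : 0 < su + sv := add_pos hupos hvpos
  have key := hW (inv_sum_smul_mem_stdSimplex hu hupos.ne')
    (inv_sum_smul_mem_stdSimplex hv hvpos.ne') (div_nonneg hupos.le hs.le)
    (div_nonneg hvpos.le hs.le) (by field_simp)
  have hmix :
      (su / (su + sv)) • su⁻¹ • u + (sv / (su + sv)) • sv⁻¹ • v = (su + sv)⁻¹ • (u + v) := by
    simp only [smul_smul, smul_add]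
    congr 2 <;> field_simp
  rw [hmix] at key
  simp only [perspective, hsum]
  calc su * W (su⁻¹ • u) + sv * W (sv⁻¹ • v)
      = (su + sv) * (su / (su + sv) * W (su⁻¹ • u) + sv / (su + sv) * W (sv⁻¹ • v)) := by
        field_simp
    _ ≤ (su + sv) * (W ((su + sv)⁻¹ • (u + v)) + D) := mul_le_mul_of_nonneg_left key hs.le
    _ = _ := mul_add _ _ _

end Perspective

section ConcaveOnSimplex

variable {K : Type*} [Fintype K] {f : (K → ℝ) → ℝ} {π : K → ℝ} {c : ℝ}

theorem _root_.ConcaveOn.mul_le_of_abs_sub_le (hf : ConcaveOn ℝ (stdSimplex ℝ K) f)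
    (hf0 : ∀ ζ ∈ stdSimplex ℝ K, 0 ≤ f ζ) (hπ : π ∈ stdSimplex ℝ K) (hcπ : ∀ ℓ, c ≤ π ℓ)
    {s : ℝ} (hs0 : 0 < s) (hs1 : s ≤ 1) {ζ : K → ℝ} (hζ : ζ ∈ stdSimplex ℝ K)
    (hζπ : ∀ ℓ, |ζ ℓ - π ℓ| ≤ s * c) : (1 - s) * f π ≤ f ζ := by
  set η := π + s⁻¹ • (ζ - π)
  have hη : η ∈ stdSimplex ℝ K := by
    refine ⟨fun ℓ => ?_, ?_⟩
    · have : -c ≤ s⁻¹ * (ζ ℓ - π ℓ) := by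
        rw [le_inv_mul_iff₀ hs0]; linarith [(abs_le.1 (hζπ ℓ)).1]
      simp only [η, Pi.add_apply, Pi.smul_apply, Pi.sub_apply, smul_eq_mul]
      linarith [hcπ ℓ]
    · simp [η, sum_add_distrib, ← mul_sum, sum_sub_distrib, hζ.2, hπ.2]
  have hζη : (1 - s) • π + s • η = ζ := by
    funext ℓ
    simp only [η, Pi.add_apply, Pi.smul_apply, Pi.sub_apply, smul_eq_mul]
    field_simp
    ring
  have hconc := hf.2 hπ hη (sub_nonneg.2 hs1) hs0.le (by ring)
  rw [hζη, smul_eq_mul, smul_eq_mul] at hconc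
  linarith [mul_nonneg hs0.le (hf0 η hη)]

theorem _root_.ConcaveOn.le_add_div_of_forall_sub_le (hf : ConcaveOn ℝ (stdSimplex ℝ K) f)
    (hπ : π ∈ stdSimplex ℝ K) (hc : 0 < c) (hcπ : ∀ ℓ, c ≤ π ℓ) {ε : ℝ}
    (hε : ∀ ζ ∈ stdSimplex ℝ K, f π - ε ≤ f ζ) {ξ : K → ℝ} (hξ : ξ ∈ stdSimplex ℝ K) :
    f ξ ≤ f π + ε / c := by
  set t := c / (1 + c) with ht
  have ht0 : 0 < t := by positivity
  have ht1 : 1 - t = 1 / (1 + c) := by rw [ht]; field_simp; ring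
  have ht1' : 0 < 1 - t := by rw [ht1]; positivity
  set ρ := (1 - t)⁻¹ • (π - t • ξ)
  have hρ : ρ ∈ stdSimplex ℝ K := by
    refine ⟨fun ℓ => mul_nonneg (inv_nonneg.2 ht1'.le) (sub_nonneg.2 ?_), ?_⟩
    · calc t * ξ ℓ ≤ t * 1 := mul_le_mul_of_nonneg_left (mem_Icc_of_mem_stdSimplex hξ ℓ).2 ht0.le
        _ ≤ c := by rw [mul_one]; exact div_le_self hc.le (by linarith)
        _ ≤ π ℓ := hcπ ℓ
    · simp only [ρ, Pi.smul_apply, Pi.sub_apply, smul_eq_mul, ← mul_sum, sum_sub_distrib, hπ.2,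
        hξ.2, mul_one, inv_mul_cancel₀ ht1'.ne']
  have hπρ : t • ξ + (1 - t) • ρ = π := by
    funext ℓ
    simp only [ρ, Pi.add_apply, Pi.smul_apply, Pi.sub_apply, smul_eq_mul]
    field_simp
    ring
  have hconc := hf.2 hξ hρ ht0.le ht1'.le (by ring)
  rw [hπρ, smul_eq_mul, smul_eq_mul] at hconc
  have hρε := mul_le_mul_of_nonneg_left (hε ρ hρ) ht1'.le
  have htc : t * (ε / c) = (1 - t) * ε := by rw [ht1, ht]; field_simp
  exact le_of_mul_le_mul_left (by linarith) ht0

end ConcaveOnSimplex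

section Strategies

variable {K I : Type*} [Fintype I]

theorem exists_strategy_joint_eq [Nonempty I] {p q : K → ℝ} (hp : 0 ≤ p) (hq : 0 ≤ q)
    {χ₁ χ₂ : K → I → ℝ} (hχ₁ : ∀ ℓ, χ₁ ℓ ∈ stdSimplex ℝ I) (hχ₂ : ∀ ℓ, χ₂ ℓ ∈ stdSimplex ℝ I)
    {a b : ℝ} (ha : 0 ≤ a) (hb : 0 ≤ b) :
    ∃ χ : K → I → ℝ, (∀ ℓ, χ ℓ ∈ stdSimplex ℝ I) ∧
      ∀ ℓ i, (a • p + b • q) ℓ * χ ℓ i = a * (p ℓ * χ₁ ℓ i) + b * (q ℓ * χ₂ ℓ i) := by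
  choose χ hχ hjoint using fun ℓ => exists_mem_stdSimplex_smul_eq
    (u := fun i => a * (p ℓ * χ₁ ℓ i) + b * (q ℓ * χ₂ ℓ i)) fun i =>
      add_nonneg (mul_nonneg ha (mul_nonneg (hp ℓ) ((hχ₁ ℓ).1 i)))
        (mul_nonneg hb (mul_nonneg (hq ℓ) ((hχ₂ ℓ).1 i)))
  refine ⟨χ, hχ, fun ℓ i => ?_⟩
  rw [congrFun (hjoint ℓ) i]
  simp only [sum_add_distrib, ← mul_sum, (hχ₁ ℓ).2, (hχ₂ ℓ).2, mul_one, Pi.add_apply,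
    Pi.smul_apply, smul_eq_mul]

end Strategies

section Game

variable {K I J : Type*} [Fintype K] [Fintype I] [Fintype J] [Nonempty J]
  {M : Matrix K K ℝ} {G : K → I → J → ℝ} {C : ℝ}

def continuationValue (M : Matrix K K ℝ) (W : (K → ℝ) → ℝ) (ξ : K → ℝ) (χ : K → I → ℝ) : ℝ :=
  ∑ i, actionProb ξ χ i * W (posterior ξ χ i ᵥ* M)

def bellmanValues (M : Matrix K K ℝ) (G : K → I → J → ℝ) (α β : ℝ) (W : (K → ℝ) → ℝ)
    (ξ : K → ℝ) : Set ℝ :=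
  {x | ∃ χ : K → I → ℝ, (∀ ℓ, χ ℓ ∈ stdSimplex ℝ I) ∧
    x = α * onestagePayoff G ξ χ + β * continuationValue M W ξ χ}

def bellmanOp (M : Matrix K K ℝ) (G : K → I → J → ℝ) (α β : ℝ) (W : (K → ℝ) → ℝ)
    (ξ : K → ℝ) : ℝ :=
  sSup (bellmanValues M G α β W ξ)

theorem sum_actionProb {ξ : K → ℝ} {χ : K → I → ℝ} (hξ : ξ ∈ stdSimplex ℝ K)
    (hχ : ∀ ℓ, χ ℓ ∈ stdSimplex ℝ I) : ∑ i, actionProb ξ χ i = 1 := by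
  simp only [actionProb]
  rw [sum_comm]
  simp only [← mul_sum, (hχ _).2, mul_one, hξ.2]

theorem onestagePayoff_nonneg (hG : ∀ ℓ i j, 0 ≤ G ℓ i j) {ξ : K → ℝ} (hξ : 0 ≤ ξ)
    {χ : K → I → ℝ} (hχ : ∀ ℓ, χ ℓ ∈ stdSimplex ℝ I) : 0 ≤ onestagePayoff G ξ χ :=
  le_ciInf fun j => sum_nonneg fun ℓ _ => mul_nonneg (hξ ℓ)
    (sum_nonneg fun i _ => mul_nonneg ((hχ ℓ).1 i) (hG ℓ i j))

theorem onestagePayoff_le (hGC : ∀ ℓ i j, G ℓ i j ≤ C) {ξ : K → ℝ} (hξ : ξ ∈ stdSimplex ℝ K)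
    {χ : K → I → ℝ} (hχ : ∀ ℓ, χ ℓ ∈ stdSimplex ℝ I) : onestagePayoff G ξ χ ≤ C := by
  obtain ⟨j⟩ := ‹Nonempty J›
  refine (ciInf_le (Finite.bddBelow_range _) j).trans ?_
  calc ∑ ℓ, ξ ℓ * ∑ i, χ ℓ i * G ℓ i j ≤ ∑ ℓ, ξ ℓ * ∑ i, χ ℓ i * C :=
        sum_le_sum fun ℓ _ => mul_le_mul_of_nonneg_left
          (sum_le_sum fun i _ => mul_le_mul_of_nonneg_left (hGC ℓ i j) ((hχ ℓ).1 i)) (hξ.1 ℓ)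
    _ = C := by simp only [← sum_mul, (hχ _).2, one_mul, hξ.2]

theorem onestagePayoff_mix {ξ p q : K → ℝ} {χ χ₁ χ₂ : K → I → ℝ} {a b : ℝ} (ha : 0 ≤ a)
    (hb : 0 ≤ b) (hχ : ∀ ℓ i, ξ ℓ * χ ℓ i = a * (p ℓ * χ₁ ℓ i) + b * (q ℓ * χ₂ ℓ i)) :
    a * onestagePayoff G p χ₁ + b * onestagePayoff G q χ₂ ≤ onestagePayoff G ξ χ := by
  refine le_ciInf fun j => ?_
  have hjoint : ∀ (ξ : K → ℝ) (χ : K → I → ℝ),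
      ∑ ℓ, ξ ℓ * ∑ i, χ ℓ i * G ℓ i j = ∑ ℓ, ∑ i, ξ ℓ * χ ℓ i * G ℓ i j := by
    simp only [mul_sum, mul_assoc, implies_true]
  calc a * onestagePayoff G p χ₁ + b * onestagePayoff G q χ₂
      ≤ a * ∑ ℓ, p ℓ * ∑ i, χ₁ ℓ i * G ℓ i j + b * ∑ ℓ, q ℓ * ∑ i, χ₂ ℓ i * G ℓ i j :=
        add_le_add (mul_le_mul_of_nonneg_left (ciInf_le (Finite.bddBelow_range _) j) ha)
          (mul_le_mul_of_nonneg_left (ciInf_le (Finite.bddBelow_range _) j) hb)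
    _ = ∑ ℓ, ξ ℓ * ∑ i, χ ℓ i * G ℓ i j := by
        rw [hjoint p, hjoint q, hjoint ξ]
        simp only [hχ, add_mul, sum_add_distrib, mul_sum, mul_assoc]

theorem continuationValue_eq_sum_perspective (W : (K → ℝ) → ℝ) (ξ : K → ℝ) (χ : K → I → ℝ) :
    continuationValue M W ξ χ =
      ∑ i, perspective (fun ζ => W (ζ ᵥ* M)) (fun ℓ => ξ ℓ * χ ℓ i) := by
  refine sum_congr rfl fun i _ => ?_
  congr 3
  funext ℓ
  simp [posterior, actionProb, div_eq_inv_mul]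

theorem continuationValue_mono [DecidableEq K] (hM : M ∈ rowStochastic ℝ K) {ξ : K → ℝ} (hξ : 0 ≤ ξ)
    {χ : K → I → ℝ} (hχ : ∀ ℓ, χ ℓ ∈ stdSimplex ℝ I) {W₁ W₂ : (K → ℝ) → ℝ}
    (h : ∀ ζ ∈ stdSimplex ℝ K, W₁ ζ ≤ W₂ ζ) :
    continuationValue M W₁ ξ χ ≤ continuationValue M W₂ ξ χ := by
  simp only [continuationValue_eq_sum_perspective]
  exact sum_le_sum fun i _ => perspective_mono (fun ζ hζ => h _ (vecMul_mem_stdSimplex hM hζ))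
    fun ℓ => mul_nonneg (hξ ℓ) ((hχ ℓ).1 i)

theorem continuationValue_affine {ξ : K → ℝ} (hξ : ξ ∈ stdSimplex ℝ K) {χ : K → I → ℝ}
    (hχ : ∀ ℓ, χ ℓ ∈ stdSimplex ℝ I) (W : (K → ℝ) → ℝ) (a c : ℝ) :
    continuationValue M (fun ζ => a * W ζ + c) ξ χ = a * continuationValue M W ξ χ + c := by
  simp only [continuationValue, mul_add, sum_add_distrib, ← sum_mul, sum_actionProb hξ hχ,
    one_mul, mul_sum]
  exact congrArg (· + c) (sum_congr rfl fun i _ => by ring)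

theorem continuationValue_const {ξ : K → ℝ} (hξ : ξ ∈ stdSimplex ℝ K) {χ : K → I → ℝ}
    (hχ : ∀ ℓ, χ ℓ ∈ stdSimplex ℝ I) (c : ℝ) : continuationValue M (fun _ => c) ξ χ = c := by
  simp only [continuationValue, ← sum_mul, sum_actionProb hξ hχ, one_mul]

theorem continuationValue_le [DecidableEq K] (hM : M ∈ rowStochastic ℝ K) {ξ : K → ℝ}
    (hξ : ξ ∈ stdSimplex ℝ K) {χ : K → I → ℝ} (hχ : ∀ ℓ, χ ℓ ∈ stdSimplex ℝ I)
    {W : (K → ℝ) → ℝ} {B : ℝ} (hW : ∀ ζ ∈ stdSimplex ℝ K, W ζ ≤ B) :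
    continuationValue M W ξ χ ≤ B :=
  (continuationValue_mono hM hξ.1 hχ hW).trans_eq (continuationValue_const hξ hχ B)

theorem le_continuationValue [DecidableEq K] (hM : M ∈ rowStochastic ℝ K) {ξ : K → ℝ}
    (hξ : ξ ∈ stdSimplex ℝ K) {χ : K → I → ℝ} (hχ : ∀ ℓ, χ ℓ ∈ stdSimplex ℝ I)
    {W : (K → ℝ) → ℝ} {b : ℝ} (hW : ∀ ζ ∈ stdSimplex ℝ K, b ≤ W ζ) :
    b ≤ continuationValue M W ξ χ :=
  (continuationValue_const hξ hχ b).symm.trans_le (continuationValue_mono hM hξ.1 hχ hW)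

theorem continuationValue_const_strategy (W : (K → ℝ) → ℝ) {ξ : K → ℝ} (hξ : ∑ ℓ, ξ ℓ = 1)
    {σ : I → ℝ} (hσ : σ ∈ stdSimplex ℝ I) :
    continuationValue M W ξ (fun _ => σ) = W (ξ ᵥ* M) := by
  have hjoint : ∀ i, (fun ℓ => ξ ℓ * σ i) = σ i • ξ := fun i => funext fun ℓ => mul_comm _ _
  simp only [continuationValue_eq_sum_perspective, hjoint, perspective_smul _ (hσ.1 _),
    perspective_of_sum_eq_one hξ, ← sum_mul, hσ.2, one_mul]

theorem ConcaveOnUpTo.comp_vecMul [DecidableEq K] {W : (K → ℝ) → ℝ} {D : ℝ}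
    (hW : ConcaveOnUpTo (stdSimplex ℝ K) W D) (hM : M ∈ rowStochastic ℝ K) :
    ConcaveOnUpTo (stdSimplex ℝ K) (fun ζ => W (ζ ᵥ* M)) D := fun _ hx _ hy _ _ ha hb hab => by
  simpa only [add_vecMul, smul_vecMul] using
    hW (vecMul_mem_stdSimplex hM hx) (vecMul_mem_stdSimplex hM hy) ha hb hab

theorem continuationValue_mix [DecidableEq K] (hM : M ∈ rowStochastic ℝ K) {W : (K → ℝ) → ℝ} {D : ℝ}
    (hW : ConcaveOnUpTo (stdSimplex ℝ K) W D) (hD : 0 ≤ D) {p q : K → ℝ}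
    (hp : p ∈ stdSimplex ℝ K) (hq : q ∈ stdSimplex ℝ K) {χ χ₁ χ₂ : K → I → ℝ}
    (hχ₁ : ∀ ℓ, χ₁ ℓ ∈ stdSimplex ℝ I) (hχ₂ : ∀ ℓ, χ₂ ℓ ∈ stdSimplex ℝ I) {a b : ℝ}
    (ha : 0 ≤ a) (hb : 0 ≤ b) (hab : a + b = 1)
    (hχ : ∀ ℓ i, (a • p + b • q) ℓ * χ ℓ i = a * (p ℓ * χ₁ ℓ i) + b * (q ℓ * χ₂ ℓ i)) :
    a * continuationValue M W p χ₁ + b * continuationValue M W q χ₂ ≤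
      continuationValue M W (a • p + b • q) χ + D := by
  set u : I → K → ℝ := fun i ℓ => p ℓ * χ₁ ℓ i
  set v : I → K → ℝ := fun i ℓ => q ℓ * χ₂ ℓ i
  have hu : ∀ i, 0 ≤ u i := fun i ℓ => mul_nonneg (hp.1 ℓ) ((hχ₁ ℓ).1 i)
  have hv : ∀ i, 0 ≤ v i := fun i ℓ => mul_nonneg (hq.1 ℓ) ((hχ₂ ℓ).1 i)
  have hjoint : ∀ i, (fun ℓ => (a • p + b • q) ℓ * χ ℓ i) = a • u i + b • v i :=
    fun i => funext fun ℓ => hχ ℓ i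
  have hmass : ∑ i, ∑ ℓ, (a • u i + b • v i) ℓ = 1 := by
    have hu₁ : ∑ i, ∑ ℓ, u i ℓ = 1 := sum_actionProb hp hχ₁
    have hv₁ : ∑ i, ∑ ℓ, v i ℓ = 1 := sum_actionProb hq hχ₂
    simp only [Pi.add_apply, Pi.smul_apply, smul_eq_mul, sum_add_distrib, ← mul_sum, hu₁, hv₁,
      mul_one, hab]
  simp only [continuationValue_eq_sum_perspective, hjoint]
  calc a * ∑ i, perspective (fun ζ => W (ζ ᵥ* M)) (u i)
        + b * ∑ i, perspective (fun ζ => W (ζ ᵥ* M)) (v i)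
      = ∑ i, (perspective (fun ζ => W (ζ ᵥ* M)) (a • u i)
          + perspective (fun ζ => W (ζ ᵥ* M)) (b • v i)) := by
        simp only [perspective_smul _ ha, perspective_smul _ hb, sum_add_distrib, mul_sum]
    _ ≤ ∑ i, (perspective (fun ζ => W (ζ ᵥ* M)) (a • u i + b • v i)
          + (∑ ℓ, (a • u i + b • v i) ℓ) * D) :=
        sum_le_sum fun i _ => perspective_add_le (hW.comp_vecMul hM) hD
          (smul_nonneg ha (hu i)) (smul_nonneg hb (hv i))
    _ = ∑ i, perspective (fun ζ => W (ζ ᵥ* M)) (a • u i + b • v i) + D := by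
        rw [sum_add_distrib, ← sum_mul, hmass, one_mul]

end Game

section Bellman

variable {K I J : Type*} [Fintype K] [Fintype I] [Fintype J] [Nonempty J]
  {M : Matrix K K ℝ} {G : K → I → J → ℝ} {C : ℝ}

theorem bellmanValues_nonempty [Nonempty I] (M : Matrix K K ℝ) (G : K → I → J → ℝ) (α β : ℝ)
    (W : (K → ℝ) → ℝ) (ξ : K → ℝ) : (bellmanValues M G α β W ξ).Nonempty := by
  classical
  exact ⟨_, fun _ => Pi.single (Classical.arbitrary I) 1, fun _ => single_mem_stdSimplex ℝ _, rfl⟩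

theorem bellmanOp_le [Nonempty I] {α β b : ℝ} {W : (K → ℝ) → ℝ} {ξ : K → ℝ}
    (h : ∀ χ : K → I → ℝ, (∀ ℓ, χ ℓ ∈ stdSimplex ℝ I) →
      α * onestagePayoff G ξ χ + β * continuationValue M W ξ χ ≤ b) :
    bellmanOp M G α β W ξ ≤ b :=
  csSup_le (bellmanValues_nonempty M G α β W ξ) fun _ ⟨χ, hχ, hx⟩ => hx ▸ h χ hχ

theorem le_bellmanOp [DecidableEq K] (hM : M ∈ rowStochastic ℝ K) (hGC : ∀ ℓ i j, G ℓ i j ≤ C)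
    {α β B : ℝ} (hα : 0 ≤ α) (hβ : 0 ≤ β) {W : (K → ℝ) → ℝ} (hW : ∀ ζ ∈ stdSimplex ℝ K, W ζ ≤ B)
    {ξ : K → ℝ} (hξ : ξ ∈ stdSimplex ℝ K) {χ : K → I → ℝ} (hχ : ∀ ℓ, χ ℓ ∈ stdSimplex ℝ I) :
    α * onestagePayoff G ξ χ + β * continuationValue M W ξ χ ≤ bellmanOp M G α β W ξ := by
  refine le_csSup ⟨α * C + β * B, ?_⟩ ⟨χ, hχ, rfl⟩
  rintro _ ⟨χ', hχ', rfl⟩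
  exact add_le_add (mul_le_mul_of_nonneg_left (onestagePayoff_le hGC hξ hχ') hα)
    (mul_le_mul_of_nonneg_left (continuationValue_le hM hξ hχ' hW) hβ)

end Bellman

section DiscountedValue

variable {K I J : Type*} [Fintype K] [Fintype I] [Fintype J] [Nonempty J]

structure IsDiscountedValue (M : Matrix K K ℝ) (G : K → I → J → ℝ) (C δ : ℝ)
    (W : (K → ℝ) → ℝ) : Prop where
  discount_mem : δ ∈ Set.Ico (0 : ℝ) 1
  nonneg : ∀ ξ ∈ stdSimplex ℝ K, 0 ≤ W ξ
  le_bound : ∀ ξ ∈ stdSimplex ℝ K, W ξ ≤ C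
  eq_bellmanOp : ∀ ξ ∈ stdSimplex ℝ K, W ξ = bellmanOp M G (1 - δ) δ W ξ

variable {M : Matrix K K ℝ} {G : K → I → J → ℝ} {C δ : ℝ} {W : (K → ℝ) → ℝ}

namespace IsDiscountedValue

theorem exists_lt_objective [Nonempty I] (hW : IsDiscountedValue M G C δ W) {ξ : K → ℝ}
    (hξ : ξ ∈ stdSimplex ℝ K) {ε : ℝ} (hε : 0 < ε) :
    ∃ χ : K → I → ℝ, (∀ ℓ, χ ℓ ∈ stdSimplex ℝ I) ∧
      W ξ - ε < (1 - δ) * onestagePayoff G ξ χ + δ * continuationValue M W ξ χ := by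
  have hlt : W ξ - ε < bellmanOp M G (1 - δ) δ W ξ := by
    rw [← hW.eq_bellmanOp ξ hξ]; linarith
  obtain ⟨_, ⟨χ, hχ, rfl⟩, hχlt⟩ := exists_lt_of_lt_csSup (bellmanValues_nonempty ..) hlt
  exact ⟨χ, hχ, hχlt⟩

variable [DecidableEq K]

theorem objective_le (hW : IsDiscountedValue M G C δ W) (hM : M ∈ rowStochastic ℝ K)
    (hGC : ∀ ℓ i j, G ℓ i j ≤ C) {ξ : K → ℝ} (hξ : ξ ∈ stdSimplex ℝ K) {χ : K → I → ℝ}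
    (hχ : ∀ ℓ, χ ℓ ∈ stdSimplex ℝ I) :
    (1 - δ) * onestagePayoff G ξ χ + δ * continuationValue M W ξ χ ≤ W ξ :=
  (hW.eq_bellmanOp ξ hξ).symm ▸ le_bellmanOp hM hGC (sub_nonneg.2 hW.discount_mem.2.le)
    hW.discount_mem.1 hW.le_bound hξ hχ

theorem mul_vecMul_le [Nonempty I] (hW : IsDiscountedValue M G C δ W)
    (hM : M ∈ rowStochastic ℝ K) (hG : ∀ ℓ i j, 0 ≤ G ℓ i j) (hGC : ∀ ℓ i j, G ℓ i j ≤ C)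
    {ξ : K → ℝ} (hξ : ξ ∈ stdSimplex ℝ K) : δ * W (ξ ᵥ* M) ≤ W ξ := by
  classical
  have hσ := single_mem_stdSimplex ℝ (Classical.arbitrary I)
  have hobj := hW.objective_le hM hGC hξ fun _ => hσ
  rw [continuationValue_const_strategy W hξ.2 hσ] at hobj
  have hr := mul_nonneg (sub_nonneg.2 hW.discount_mem.2.le)
    (onestagePayoff_nonneg hG hξ.1 fun _ => hσ)
  linarith

theorem pow_mul_vecMul_pow_le [Nonempty I] (hW : IsDiscountedValue M G C δ W)
    (hM : M ∈ rowStochastic ℝ K) (hG : ∀ ℓ i j, 0 ≤ G ℓ i j) (hGC : ∀ ℓ i j, G ℓ i j ≤ C)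
    (n : ℕ) {ξ : K → ℝ} (hξ : ξ ∈ stdSimplex ℝ K) : δ ^ n * W (ξ ᵥ* M ^ n) ≤ W ξ := by
  induction n generalizing ξ with
  | zero => simp
  | succ n ih =>
    calc δ ^ (n + 1) * W (ξ ᵥ* M ^ (n + 1)) = δ * (δ ^ n * W ((ξ ᵥ* M) ᵥ* M ^ n)) := by
          rw [vecMul_vecMul, ← pow_succ', pow_succ']; ring
      _ ≤ δ * W (ξ ᵥ* M) :=
          mul_le_mul_of_nonneg_left (ih (vecMul_mem_stdSimplex hM hξ)) hW.discount_mem.1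
      _ ≤ W ξ := hW.mul_vecMul_le hM hG hGC hξ

theorem concaveOnUpTo_mul [Nonempty I] (hW : IsDiscountedValue M G C δ W)
    (hM : M ∈ rowStochastic ℝ K) (hGC : ∀ ℓ i j, G ℓ i j ≤ C) {D : ℝ}
    (hD : ConcaveOnUpTo (stdSimplex ℝ K) W D) : ConcaveOnUpTo (stdSimplex ℝ K) W (δ * D) := by
  intro x hx y hy a b ha hb hab
  refine le_of_forall_pos_le_add fun ε hε => ?_
  obtain ⟨χ₁, hχ₁, h₁⟩ := hW.exists_lt_objective hx hε
  obtain ⟨χ₂, hχ₂, h₂⟩ := hW.exists_lt_objective hy hε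
  obtain ⟨χ, hχ, hjoint⟩ := exists_strategy_joint_eq hx.1 hy.1 hχ₁ hχ₂ ha hb
  have hr := onestagePayoff_mix (G := G) ha hb hjoint
  have hc := continuationValue_mix hM hD (hD.nonneg hx) hx hy hχ₁ hχ₂ ha hb hab hjoint
  have hobj := hW.objective_le hM hGC (convex_stdSimplex ℝ K hx hy ha hb hab) hχ
  have e₁ := mul_le_mul_of_nonneg_left h₁.le ha
  have e₂ := mul_le_mul_of_nonneg_left h₂.le hb
  have e₃ := mul_le_mul_of_nonneg_left hr (sub_nonneg.2 hW.discount_mem.2.le)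
  have e₄ := mul_le_mul_of_nonneg_left hc hW.discount_mem.1
  linear_combination e₁ + e₂ + e₃ + e₄ + hobj + ε * hab

theorem concaveOn [Nonempty I] (hW : IsDiscountedValue M G C δ W)
    (hM : M ∈ rowStochastic ℝ K) (hGC : ∀ ℓ i j, G ℓ i j ≤ C) :
    ConcaveOn ℝ (stdSimplex ℝ K) W := by
  have h₀ : ConcaveOnUpTo (stdSimplex ℝ K) W C := fun x hx y hy a b ha hb hab => by
    have hx' := mul_le_mul_of_nonneg_left (hW.le_bound x hx) ha
    have hy' := mul_le_mul_of_nonneg_left (hW.le_bound y hy) hb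
    linear_combination hx' + hy' + hW.nonneg _ (convex_stdSimplex ℝ K hx hy ha hb hab) + C * hab
  refine concaveOn_of_forall_concaveOnUpTo_pow (D := C) (convex_stdSimplex ℝ K) hW.discount_mem.1
    hW.discount_mem.2 fun n => ?_
  induction n with
  | zero => simpa using h₀
  | succ n ih => simpa only [pow_succ', mul_assoc] using hW.concaveOnUpTo_mul hM hGC ih

end IsDiscountedValue

end DiscountedValue

section TotalValue

variable {K I J : Type*} [Fintype K] [Fintype I] [Fintype J] [Nonempty J] [Nonempty I]
  [DecidableEq K] {M : Matrix K K ℝ} {G : K → I → J → ℝ} {C δ : ℝ} {W : (K → ℝ) → ℝ}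

def totalValue (M : Matrix K K ℝ) (G : K → I → J → ℝ) : ℕ → (K → ℝ) → ℝ
  | 0 => fun _ => 0
  | n + 1 => bellmanOp M G 1 1 (totalValue M G n)

theorem totalValue_le (hM : M ∈ rowStochastic ℝ K) (hGC : ∀ ℓ i j, G ℓ i j ≤ C) (n : ℕ)
    {ξ : K → ℝ} (hξ : ξ ∈ stdSimplex ℝ K) : totalValue M G n ξ ≤ n * C := by
  induction n generalizing ξ with
  | zero => simp [totalValue]
  | succ n ih =>
    refine bellmanOp_le fun χ hχ => ?_
    have hr := onestagePayoff_le hGC hξ hχ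
    have hE := continuationValue_le hM hξ hχ fun ζ hζ => ih hζ
    push_cast
    linarith

namespace IsDiscountedValue

theorem totalValue_le (hW : IsDiscountedValue M G C δ W) (hM : M ∈ rowStochastic ℝ K)
    (hGC : ∀ ℓ i j, G ℓ i j ≤ C) {B : ℝ} (hB : ∀ ζ ∈ stdSimplex ℝ K, W ζ ≤ B) (n : ℕ)
    {ξ : K → ℝ} (hξ : ξ ∈ stdSimplex ℝ K) : totalValue M G n ξ ≤ W ξ / (1 - δ) + n * B := by
  have hx : 0 < 1 - δ := sub_pos.2 hW.discount_mem.2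
  induction n generalizing ξ with
  | zero => simpa [totalValue] using div_nonneg (hW.nonneg ξ hξ) hx.le
  | succ n ih =>
    refine bellmanOp_le fun χ hχ => ?_
    have hcont := continuationValue_mono hM hξ.1 hχ
      (W₂ := fun ζ => (1 - δ)⁻¹ * W ζ + n * B) fun ζ hζ => by
        simpa only [div_eq_inv_mul] using ih hζ
    rw [continuationValue_affine hξ hχ] at hcont
    have hobj := mul_le_mul_of_nonneg_left (hW.objective_le hM hGC hξ hχ) (inv_nonneg.2 hx.le)
    have hE := continuationValue_le hM hξ hχ hB
    have hinv : (1 - δ)⁻¹ * (1 - δ) = 1 := inv_mul_cancel₀ hx.ne'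
    rw [div_eq_inv_mul]
    push_cast
    linear_combination hcont + hobj + hE +
      (continuationValue M W ξ χ - onestagePayoff G ξ χ) * hinv

theorem le_totalValue (hW : IsDiscountedValue M G C δ W) (hM : M ∈ rowStochastic ℝ K)
    (hGC : ∀ ℓ i j, G ℓ i j ≤ C) {b : ℝ} (hb : ∀ ζ ∈ stdSimplex ℝ K, b ≤ W ζ) (n : ℕ)
    {ξ : K → ℝ} (hξ : ξ ∈ stdSimplex ℝ K) :
    (W ξ - C) / (1 - δ) + n * b ≤ totalValue M G n ξ := by
  have hx : 0 < 1 - δ := sub_pos.2 hW.discount_mem.2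
  induction n generalizing ξ with
  | zero =>
    simpa [totalValue] using div_nonpos_of_nonpos_of_nonneg
      (sub_nonpos.2 (hW.le_bound ξ hξ)) hx.le
  | succ n ih =>
    suffices h : W ξ ≤ (1 - δ) * (totalValue M G (n + 1) ξ - (n + 1) * b) + C by
      rw [div_add' _ _ _ hx.ne', div_le_iff₀ hx]
      push_cast
      linarith
    rw [hW.eq_bellmanOp ξ hξ]
    refine bellmanOp_le fun χ hχ => ?_
    have hΨ := le_bellmanOp (W := totalValue M G n) hM hGC zero_le_one zero_le_one
      (fun ζ hζ => MarkovChainGame.totalValue_le hM hGC n hζ) hξ hχ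
    have hcont := continuationValue_mono hM hξ.1 hχ
      (W₁ := fun ζ => (1 - δ)⁻¹ * W ζ + (n * b - (1 - δ)⁻¹ * C)) (W₂ := totalValue M G n)
      fun ζ hζ => by
        linarith [ih hζ, show (W ζ - C) / (1 - δ) = (1 - δ)⁻¹ * W ζ - (1 - δ)⁻¹ * C by ring]
    rw [continuationValue_affine hξ hχ] at hcont
    have h₁ := mul_le_mul_of_nonneg_left hcont hx.le
    have h₂ := mul_le_mul_of_nonneg_left hΨ hx.le
    have hE := mul_le_mul_of_nonneg_left (le_continuationValue hM hξ hχ hb) hx.le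
    have hinv : (1 - δ) * (1 - δ)⁻¹ = 1 := mul_inv_cancel₀ hx.ne'
    change _ ≤ (1 - δ) * (bellmanOp M G 1 1 (totalValue M G n) ξ - (n + 1) * b) + C
    linear_combination h₁ + h₂ + hE + (C - continuationValue M W ξ χ) * hinv

theorem le_of_forall_le {δ' : ℝ} {W' : (K → ℝ) → ℝ} (hW : IsDiscountedValue M G C δ W)
    (hW' : IsDiscountedValue M G C δ' W') (hM : M ∈ rowStochastic ℝ K)
    (hGC : ∀ ℓ i j, G ℓ i j ≤ C) {ξ : K → ℝ} (hξ : ξ ∈ stdSimplex ℝ K) {b B : ℝ}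
    (hb : ∀ ζ ∈ stdSimplex ℝ K, b ≤ W ζ) (hB : ∀ ζ ∈ stdSimplex ℝ K, W' ζ ≤ B) : b ≤ B := by
  by_contra! hlt
  obtain ⟨n, hn⟩ := exists_nat_gt ((W' ξ / (1 - δ') - (W ξ - C) / (1 - δ)) / (b - B))
  rw [div_lt_iff₀ (sub_pos.2 hlt)] at hn
  linarith [hW.le_totalValue hM hGC hb n hξ, hW'.totalValue_le hM hGC hB n hξ]

end IsDiscountedValue

theorem exists_forall_abs_sub_le_two_mul {V : ℝ → (K → ℝ) → ℝ} {S : Set ℝ} (hS : S.Nonempty)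
    (hV : ∀ δ ∈ S, IsDiscountedValue M G C δ (V δ)) (hM : M ∈ rowStochastic ℝ K)
    (hGC : ∀ ℓ i j, G ℓ i j ≤ C) {π : K → ℝ} (hπ : π ∈ stdSimplex ℝ K) {ε : ℝ → ℝ}
    (hosc : ∀ δ ∈ S, ∀ ξ ∈ stdSimplex ℝ K, |V δ ξ - V δ π| ≤ ε δ) :
    ∃ v, 0 ≤ v ∧ ∀ δ ∈ S, ∀ ξ ∈ stdSimplex ℝ K, |V δ ξ - v| ≤ 2 * ε δ := by
  obtain ⟨v, hv0, hv⟩ := exists_forall_le_le_of_le (a := fun δ => V δ π - ε δ)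
    (b := fun δ => V δ π + ε δ) hS
    (fun δ hδ δ' hδ' => (hV δ hδ).le_of_forall_le (hV δ' hδ') hM hGC hπ
      (fun ζ hζ => by linarith [(abs_le.1 (hosc δ hδ ζ hζ)).1])
      (fun ζ hζ => by linarith [(abs_le.1 (hosc δ' hδ' ζ hζ)).2]))
    (fun δ hδ => add_nonneg ((hV δ hδ).nonneg π hπ) ((abs_nonneg _).trans (hosc δ hδ π hπ)))
  refine ⟨v, hv0, fun δ hδ ξ hξ => ?_⟩
  have hξπ := abs_le.1 (hosc δ hδ ξ hξ)
  have hπv := hv δ hδ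
  rw [abs_le]
  constructor <;> linarith [hπv.1, hπv.2]

end TotalValue

section RateOfConvergence

variable {K I J : Type*} [Fintype K] [Fintype I] [Fintype J] [Nonempty J] [Nonempty I]
  [DecidableEq K] {M : Matrix K K ℝ} {G : K → I → J → ℝ} {C δ : ℝ} {W : (K → ℝ) → ℝ}

namespace IsDiscountedValue

theorem sub_le_of_abs_vecMul_pow_sub_le (hW : IsDiscountedValue M G C δ W)
    (hM : M ∈ rowStochastic ℝ K) (hG : ∀ ℓ i j, 0 ≤ G ℓ i j) (hGC : ∀ ℓ i j, G ℓ i j ≤ C)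
    {π : K → ℝ} (hπ : π ∈ stdSimplex ℝ K) {c : ℝ} (hcπ : ∀ ℓ, c ≤ π ℓ) {s : ℝ} (hs0 : 0 < s)
    (hs1 : s ≤ 1) {ξ : K → ℝ} (hξ : ξ ∈ stdSimplex ℝ K) (n : ℕ)
    (hnear : ∀ ℓ, |(ξ ᵥ* M ^ n) ℓ - π ℓ| ≤ s * c) :
    W π - (s + n * (1 - δ)) * C ≤ W ξ := by
  have hδ := hW.discount_mem
  have hζ := vecMul_mem_stdSimplex (pow_mem hM n) hξ
  have hπ0 := hW.nonneg π hπ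
  have h₁ := hW.pow_mul_vecMul_pow_le hM hG hGC n hξ
  have h₂ := mul_le_mul_of_nonneg_left
    ((hW.concaveOn hM hGC).mul_le_of_abs_sub_le hW.nonneg hπ hcπ hs0 hs1 hζ hnear)
    (pow_nonneg hδ.1 n)
  have hbern : 1 - n * (1 - δ) ≤ δ ^ n := by
    have := one_add_mul_le_pow (a := δ - 1) (by linarith [hδ.1]) n
    rw [add_sub_cancel] at this
    linarith
  have h₃ := mul_le_mul_of_nonneg_right hbern (mul_nonneg (sub_nonneg.2 hs1) hπ0)
  have h₄ : 0 ≤ n * (1 - δ) * (s * W π) :=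
    mul_nonneg (mul_nonneg n.cast_nonneg (sub_nonneg.2 hδ.2.le)) (mul_nonneg hs0.le hπ0)
  have h₅ : 0 ≤ (s + n * (1 - δ)) * (C - W π) :=
    mul_nonneg (by positivity [sub_nonneg.2 hδ.2.le]) (sub_nonneg.2 (hW.le_bound π hπ))
  linarith

theorem abs_sub_le [Nonempty K] (hW : IsDiscountedValue M G C δ W)
    (hM : M ∈ rowStochastic ℝ K) (hG : ∀ ℓ i j, 0 ≤ G ℓ i j) (hGC : ∀ ℓ i j, G ℓ i j ≤ C)
    {N : ℕ} {κ : ℝ} (hκ : 0 < κ) (hκ1 : κ ≤ 1) {π : K → ℝ} (hπ : π ∈ stdSimplex ℝ K)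
    (hmix : ∀ k : ℕ, ∀ p ∈ stdSimplex ℝ K, ∀ ℓ, |(p ᵥ* M ^ (N * k)) ℓ - π ℓ| ≤ 2 * (1 - κ) ^ k)
    {c : ℝ} (hc : 0 < c) (hcπ : ∀ ℓ, c ≤ π ℓ) (hδ : 1 - c / 2 < δ) {ξ : K → ℝ}
    (hξ : ξ ∈ stdSimplex ℝ K) :
    |W ξ - W π| ≤
      (2 * C / c + N * C * (1 + 1 / κ)) * (1 + 1 / c) * ((1 - δ) * Real.logb 2 (1 / (1 - δ))) := by
  set x := 1 - δ
  set k := ⌈Real.log (1 / x) / κ⌉₊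
  set A := 2 * C / c + N * C * (1 + 1 / κ)
  have hx0 : 0 < x := sub_pos.2 hW.discount_mem.2
  have hc1 : c ≤ 1 := (hcπ (Classical.arbitrary K)).trans (mem_Icc_of_mem_stdSimplex hπ _).2
  have hC0 : 0 ≤ C := (hW.nonneg π hπ).trans (hW.le_bound π hπ)
  have hlow : ∀ ζ ∈ stdSimplex ℝ K, W π - A * (x * Real.logb 2 (1 / x)) ≤ W ζ := by
    intro ζ hζ
    have hnear : ∀ ℓ, |(ζ ᵥ* M ^ (N * k)) ℓ - π ℓ| ≤ 2 * x / c * c := fun ℓ => by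
      rw [div_mul_cancel₀ _ hc.ne']
      linarith [hmix k ζ hζ ℓ, one_sub_pow_natCeil_log_le hκ hκ1 hx0]
    have hsub := hW.sub_le_of_abs_vecMul_pow_sub_le hM hG hGC hπ hcπ (by positivity)
      (by rw [div_le_one hc]; linarith) hζ (N * k) hnear
    have hcost := mixing_cost_le N hκ hx0 (by linarith) hc hC0
    push_cast at hsub
    linarith
  have hup := (hW.concaveOn hM hGC).le_add_div_of_forall_sub_le hπ hc hcπ hlow hξ
  have hAr : 0 ≤ A * (x * Real.logb 2 (1 / x)) := by
    have hL := Real.logb_nonneg one_lt_two (one_le_one_div hx0 (by linarith))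
    positivity
  have hsplit : A * (1 + 1 / c) * (x * Real.logb 2 (1 / x)) =
      A * (x * Real.logb 2 (1 / x)) + A * (x * Real.logb 2 (1 / x)) / c := by ring
  rw [abs_le, hsplit]
  constructor <;> linarith [hlow ξ hξ, div_nonneg hAr hc.le]

end IsDiscountedValue

end RateOfConvergence

end MarkovChainGame

theorem IsGameValueFamily.isDiscountedValue {K I J : Type*} [Fintype K] [Fintype I] [Fintype J]
    [Nonempty J] {M : Matrix K K ℝ} {G : K → I → J → ℝ} {C : ℝ} {V : ℝ → (K → ℝ) → ℝ}
    (hV : IsGameValueFamily M G C V) {δ : ℝ} (hδ : δ ∈ Set.Ico (0 : ℝ) 1) :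
    MarkovChainGame.IsDiscountedValue M G C δ (V δ) :=
  ⟨hδ, fun ξ hξ => ((hV δ hδ).1 ξ hξ).1, fun ξ hξ => ((hV δ hδ).1 ξ hξ).2, (hV δ hδ).2⟩

open MarkovChainGame in
theorem markov_chain_game_rate_of_convergence_general
    {K I J : Type*} [Fintype K] [Nonempty K] [DecidableEq K]
    [Fintype I] [Nonempty I] [Fintype J] [Nonempty J]
    (M : Matrix K K ℝ) (hM : IsStochastic M)
    (herg : ∃ N : ℕ, 1 ≤ N ∧ ∀ i j, 0 < (M ^ N) i j)
    (G : K → I → J → ℝ) (hG : ∀ ℓ i j, 0 ≤ G ℓ i j)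
    (C : ℝ) (hC : IsGreatest { x : ℝ | ∃ ℓ i j, x = G ℓ i j } C)
    (V : ℝ → (K → ℝ) → ℝ) (hV : IsGameValueFamily M G C V)
    (πM : K → ℝ) (hπ : πM ∈ stdSimplex ℝ K) (hπinv : Matrix.vecMul πM M = πM)
    (hπpos : ∀ ℓ, 0 < πM ℓ)
    (cstar : ℝ) (hcstar : IsLeast (Set.range πM) cstar) :
    ∃ Vinf Cconst : ℝ, 0 ≤ Vinf ∧ 0 < Cconst ∧
      ∀ δ : ℝ, 1 - cstar / 2 < δ → δ < 1 →
        ∀ ξ ∈ stdSimplex ℝ K,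
          |V δ ξ - Vinf| ≤ Cconst * ((1 - δ) * Real.logb 2 (1 / (1 - δ))) := by
  have hGC : ∀ ℓ i j, G ℓ i j ≤ C := fun ℓ i j => hC.2 ⟨ℓ, i, j, rfl⟩
  have hC0 : 0 ≤ C := by obtain ⟨ℓ, i, j, rfl⟩ := hC.1; exact hG ℓ i j
  have hM' := hM.mem_rowStochastic
  obtain ⟨N, -, hN⟩ := herg
  obtain ⟨κ, hκ, hκ1, hmix⟩ := exists_geometric_mixing hM' hN hπ hπinv
  obtain ⟨ℓ₀, rfl⟩ := hcstar.1
  have hc := hπpos ℓ₀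
  have hcπ : ∀ ℓ, πM ℓ₀ ≤ πM ℓ := fun ℓ => hcstar.2 ⟨ℓ, rfl⟩
  have hW : ∀ δ ∈ Set.Ioo (1 - πM ℓ₀ / 2) 1, IsDiscountedValue M G C δ (V δ) := fun δ hδ =>
    hV.isDiscountedValue ⟨by linarith [hδ.1, (mem_Icc_of_mem_stdSimplex hπ ℓ₀).2], hδ.2⟩
  set A := (2 * C / πM ℓ₀ + N * C * (1 + 1 / κ)) * (1 + 1 / πM ℓ₀)
  obtain ⟨Vinf, hVinf0, hVinf⟩ := exists_forall_abs_sub_le_two_mul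
    (S := Set.Ioo (1 - πM ℓ₀ / 2) 1) (ε := fun δ => A * ((1 - δ) * Real.logb 2 (1 / (1 - δ))))
    ⟨1 - πM ℓ₀ / 4, by linarith, by linarith⟩ hW hM' hGC hπ
    fun δ hδ ξ hξ => (hW δ hδ).abs_sub_le hM' hG hGC hκ hκ1 hπ hmix hc hcπ hδ.1 hξ
  refine ⟨Vinf, 2 * A + 1, hVinf0, by positivity, fun δ h₁ h₂ ξ hξ =>
    (hVinf δ ⟨h₁, h₂⟩ ξ hξ).trans ?_⟩
  have hrate : 0 ≤ (1 - δ) * Real.logb 2 (1 / (1 - δ)) :=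
    mul_nonneg (sub_nonneg.2 h₂.le) (Real.logb_nonneg one_lt_two
      (one_le_one_div (sub_pos.2 h₂) (by linarith [(hW δ ⟨h₁, h₂⟩).discount_mem.1])))
  linarith

theorem markov_chain_game_rate_of_convergence
    {K I J : Type*} [Fintype K] [Nonempty K] [DecidableEq K]
    [Fintype I] [Nonempty I] [Fintype J] [Nonempty J]
    (M : Matrix K K ℝ) (hM : IsStochastic M)
    (herg : ∃ N : ℕ, 1 ≤ N ∧ ∀ i j, 0 < (M ^ N) i j)
    (G : K → I → J → ℝ) (hG : ∀ ℓ i j, 0 ≤ G ℓ i j)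
    (C : ℝ) (hC : IsGreatest { x : ℝ | ∃ ℓ i j, x = G ℓ i j } C)
    (V : ℝ → (K → ℝ) → ℝ) (hV : IsGameValueFamily M G C V)
    (πM : K → ℝ) (hπ : πM ∈ stdSimplex ℝ K) (hπinv : Matrix.vecMul πM M = πM)
    (hπuniq : ∀ π' ∈ stdSimplex ℝ K, Matrix.vecMul π' M = π' → π' = πM)
    (hπpos : ∀ ℓ, 0 < πM ℓ)
    (cstar : ℝ) (hcstar : IsLeast (Set.range πM) cstar) :
    ∃ Vinf Cconst : ℝ, 0 ≤ Vinf ∧ 0 < Cconst ∧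
      ∀ δ : ℝ, 1 - cstar / 2 < δ → δ < 1 →
        ∀ ξ ∈ stdSimplex ℝ K,
          |V δ ξ - Vinf| ≤ Cconst * ((1 - δ) * Real.logb 2 (1 / (1 - δ))) :=
  markov_chain_game_rate_of_convergence_general M hM herg G hG C hC V hV πM hπ hπinv hπpos cstar
    hcstar
end
end

section
/- Assume M is irreducible with unique invariant distribution π_M, and let ξ₁, …, ξ_k ∈ Δ(K) (k = |K|) be affinely independent beliefs such that ξM ∈ conv{ξ₁, …, ξ_k} for every ξ ∈ Δ(K). Let γ₁, …, γ_k be the unique convex weights (γ_i ≥ 0, Σ_i γ_i = 1) with π_M = Σ_i γ_i ξ_i. Then the trajectory δ ↦ Σ_{i=1}^{k} γ_i · V_δ(ξ_i) is non-decreasing on [0,1). -/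
open scoped BigOperators

noncomputable section

set_option linter.unusedSectionVars false
set_option linter.unusedVariables false
set_option maxHeartbeats 2000000

section Basics
variable {K I J : Type*} [Fintype K] [Fintype I] [Fintype J] [Nonempty J]

lemma mem_stdSimplex' {ξ : K → ℝ} (h : ξ ∈ stdSimplex ℝ K) :
    (∀ ℓ, 0 ≤ ξ ℓ) ∧ ∑ ℓ, ξ ℓ = 1 := h

lemma stdSimplex_mem {ξ : K → ℝ} (h0 : ∀ ℓ, 0 ≤ ξ ℓ) (h1 : ∑ ℓ, ξ ℓ = 1) :
    ξ ∈ stdSimplex ℝ K := ⟨h0, h1⟩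

lemma actionProb_nonneg {ξ : K → ℝ} {χ : K → I → ℝ} (hξ : ∀ ℓ, 0 ≤ ξ ℓ)
    (hχ : ∀ ℓ i, 0 ≤ χ ℓ i) (i : I) : 0 ≤ actionProb ξ χ i :=
  Finset.sum_nonneg fun ℓ _ => mul_nonneg (hξ ℓ) (hχ ℓ i)

lemma sum_actionProb {ξ : K → ℝ} {χ : K → I → ℝ} (hξ : ξ ∈ stdSimplex ℝ K)
    (hχ : ∀ ℓ, χ ℓ ∈ stdSimplex ℝ I) : ∑ i, actionProb ξ χ i = 1 := by
  unfold actionProb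
  rw [Finset.sum_comm]
  have : ∀ ℓ, ∑ i, ξ ℓ * χ ℓ i = ξ ℓ := by
    intro ℓ; rw [← Finset.mul_sum, (hχ ℓ).2, mul_one]
  simp_rw [this]; exact hξ.2

lemma term_zero_of_actionProb_zero {ξ : K → ℝ} {χ : K → I → ℝ} (hξ : ∀ ℓ, 0 ≤ ξ ℓ)
    (hχ : ∀ ℓ i, 0 ≤ χ ℓ i) {i : I} (h : actionProb ξ χ i = 0) (ℓ : K) :
    ξ ℓ * χ ℓ i = 0 := by
  have := (Finset.sum_eq_zero_iff_of_nonneg (fun ℓ _ => mul_nonneg (hξ ℓ) (hχ ℓ i))).1 h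
  exact this ℓ (Finset.mem_univ ℓ)

lemma posterior_mem {ξ : K → ℝ} {χ : K → I → ℝ} (hξ : ∀ ℓ, 0 ≤ ξ ℓ)
    (hχ : ∀ ℓ i, 0 ≤ χ ℓ i) {i : I} (h : actionProb ξ χ i ≠ 0) :
    posterior ξ χ i ∈ stdSimplex ℝ K := by
  have hpos : 0 < actionProb ξ χ i :=
    lt_of_le_of_ne (actionProb_nonneg hξ hχ i) (Ne.symm h)
  refine ⟨fun ℓ => div_nonneg (mul_nonneg (hξ ℓ) (hχ ℓ i)) hpos.le, ?_⟩
  unfold posterior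
  rw [← Finset.sum_div]
  exact div_self h

lemma sum_actionProb_smul_posterior {ξ : K → ℝ} {χ : K → I → ℝ} (hξ : ∀ ℓ, 0 ≤ ξ ℓ)
    (hχ : ∀ ℓ i, 0 ≤ χ ℓ i) (hχ1 : ∀ ℓ, ∑ i, χ ℓ i = 1) (ℓ : K) :
    ∑ i, actionProb ξ χ i * posterior ξ χ i ℓ = ξ ℓ := by
  have : ∀ i, actionProb ξ χ i * posterior ξ χ i ℓ = ξ ℓ * χ ℓ i := by
    intro i
    by_cases h : actionProb ξ χ i = 0
    · rw [h, zero_mul, (term_zero_of_actionProb_zero hξ hχ h ℓ)]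
    · unfold posterior; field_simp
  simp_rw [this, ← Finset.mul_sum, hχ1 ℓ, mul_one]

lemma vecMul_mem_simplex {M : Matrix K K ℝ} (hM : IsStochastic M) {ξ : K → ℝ}
    (hξ : ξ ∈ stdSimplex ℝ K) : Matrix.vecMul ξ M ∈ stdSimplex ℝ K := by
  constructor
  · intro j
    exact Finset.sum_nonneg fun ℓ _ => mul_nonneg (hξ.1 ℓ) (hM.1 ℓ j)
  · have : ∀ (j : K), Matrix.vecMul ξ M j = ∑ ℓ, ξ ℓ * M ℓ j := by
      intro j; simp [Matrix.vecMul, dotProduct]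
    simp_rw [this]
    rw [Finset.sum_comm]
    have : ∀ ℓ, ∑ j, ξ ℓ * M ℓ j = ξ ℓ := by
      intro ℓ; rw [← Finset.mul_sum, hM.2 ℓ, mul_one]
    simp_rw [this]; exact hξ.2

lemma onestage_nonneg {G : K → I → J → ℝ} (hG : ∀ ℓ i j, 0 ≤ G ℓ i j) {ξ : K → ℝ}
    {χ : K → I → ℝ} (hξ : ∀ ℓ, 0 ≤ ξ ℓ) (hχ : ∀ ℓ i, 0 ≤ χ ℓ i) :
    0 ≤ onestagePayoff G ξ χ := by
  refine le_ciInf fun j => Finset.sum_nonneg fun ℓ _ => mul_nonneg (hξ ℓ) ?_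
  exact Finset.sum_nonneg fun i _ => mul_nonneg (hχ ℓ i) (hG ℓ i j)

lemma onestage_le {G : K → I → J → ℝ} {C : ℝ}
    (hC : ∀ ℓ i j, G ℓ i j ≤ C) {ξ : K → ℝ} {χ : K → I → ℝ}
    (hξ : ξ ∈ stdSimplex ℝ K) (hχ : ∀ ℓ, χ ℓ ∈ stdSimplex ℝ I) :
    onestagePayoff G ξ χ ≤ C := by
  obtain ⟨j⟩ := ‹Nonempty J›
  refine le_trans (ciInf_le (Set.Finite.bddBelow (Set.finite_range _)) j) ?_
  calc ∑ ℓ, ξ ℓ * ∑ i, χ ℓ i * G ℓ i j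
      ≤ ∑ ℓ, ξ ℓ * C := by
        refine Finset.sum_le_sum fun ℓ _ => mul_le_mul_of_nonneg_left ?_ (hξ.1 ℓ)
        calc ∑ i, χ ℓ i * G ℓ i j ≤ ∑ i, χ ℓ i * C :=
              Finset.sum_le_sum fun i _ =>
                mul_le_mul_of_nonneg_left (hC ℓ i j) ((hχ ℓ).1 i)
          _ = C := by rw [← Finset.sum_mul, (hχ ℓ).2, one_mul]
    _ = C := by rw [← Finset.sum_mul, hξ.2, one_mul]

end Basics


section Bell
variable {K I J : Type*} [Fintype K] [Fintype I] [Nonempty I] [Fintype J] [Nonempty J]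

def bellExpr (M : Matrix K K ℝ) (G : K → I → J → ℝ) (W : (K → ℝ) → ℝ) (δ : ℝ)
    (ξ : K → ℝ) (χ : K → I → ℝ) : ℝ :=
  (1 - δ) * onestagePayoff G ξ χ +
    δ * ∑ i, actionProb ξ χ i * W (Matrix.vecMul (posterior ξ χ i) M)

def bellSet (M : Matrix K K ℝ) (G : K → I → J → ℝ) (W : (K → ℝ) → ℝ) (δ : ℝ)
    (ξ : K → ℝ) : Set ℝ :=
  { x : ℝ | ∃ χ : K → I → ℝ, (∀ ℓ, χ ℓ ∈ stdSimplex ℝ I) ∧ x = bellExpr M G W δ ξ χ }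

variable {M : Matrix K K ℝ} {G : K → I → J → ℝ} {C : ℝ} {W : (K → ℝ) → ℝ} {δ : ℝ}
  {ξ : K → ℝ}

lemma bellExpr_le (hM : IsStochastic M) (hδ : δ ∈ Set.Ico (0:ℝ) 1)
    (hGC : ∀ ℓ i j, G ℓ i j ≤ C)
    (hW : ∀ ζ ∈ stdSimplex ℝ K, 0 ≤ W ζ ∧ W ζ ≤ C)
    (hξ : ξ ∈ stdSimplex ℝ K) (hC0 : 0 ≤ C)
    {χ : K → I → ℝ} (hχ : ∀ ℓ, χ ℓ ∈ stdSimplex ℝ I) :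
    bellExpr M G W δ ξ χ ≤ C := by
  have hχ0 : ∀ ℓ i, 0 ≤ χ ℓ i := fun ℓ i => (hχ ℓ).1 i
  have hCont : ∀ i, actionProb ξ χ i * W (Matrix.vecMul (posterior ξ χ i) M)
      ≤ actionProb ξ χ i * C := by
    intro i
    by_cases h : actionProb ξ χ i = 0
    · simp [h]
    · have hpost := posterior_mem hξ.1 hχ0 h
      have := (hW _ (vecMul_mem_simplex hM hpost)).2
      exact mul_le_mul_of_nonneg_left this (actionProb_nonneg hξ.1 hχ0 i)
  have h2 : ∑ i, actionProb ξ χ i * W (Matrix.vecMul (posterior ξ χ i) M) ≤ C := by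
    calc ∑ i, actionProb ξ χ i * W (Matrix.vecMul (posterior ξ χ i) M)
        ≤ ∑ i, actionProb ξ χ i * C := Finset.sum_le_sum fun i _ => hCont i
      _ = C := by rw [← Finset.sum_mul, sum_actionProb hξ hχ, one_mul]
  have h1 : onestagePayoff G ξ χ ≤ C := onestage_le hGC hξ hχ
  unfold bellExpr
  nlinarith [hδ.1, hδ.2]

lemma bellExpr_nonneg (hM : IsStochastic M) (hδ : δ ∈ Set.Ico (0:ℝ) 1)
    (hG : ∀ ℓ i j, 0 ≤ G ℓ i j)
    (hW : ∀ ζ ∈ stdSimplex ℝ K, 0 ≤ W ζ ∧ W ζ ≤ C)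
    (hξ : ξ ∈ stdSimplex ℝ K) {χ : K → I → ℝ} (hχ : ∀ ℓ, χ ℓ ∈ stdSimplex ℝ I) :
    0 ≤ bellExpr M G W δ ξ χ := by
  have hχ0 : ∀ ℓ i, 0 ≤ χ ℓ i := fun ℓ i => (hχ ℓ).1 i
  have h1 : 0 ≤ onestagePayoff G ξ χ := onestage_nonneg hG hξ.1 hχ0
  have h2 : 0 ≤ ∑ i, actionProb ξ χ i * W (Matrix.vecMul (posterior ξ χ i) M) := by
    refine Finset.sum_nonneg fun i _ => ?_
    by_cases h : actionProb ξ χ i = 0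
    · simp [h]
    · exact mul_nonneg (actionProb_nonneg hξ.1 hχ0 i)
        ((hW _ (vecMul_mem_simplex hM (posterior_mem hξ.1 hχ0 h))).1)
  unfold bellExpr
  have := hδ.1; have := hδ.2
  have : 0 ≤ 1 - δ := by linarith
  positivity

def unifStrat (K : Type*) (I : Type*) [Fintype I] [Nonempty I] : K → I → ℝ :=
  fun _ _ => (Fintype.card I : ℝ)⁻¹

lemma unifStrat_mem : ∀ ℓ : K, unifStrat K I ℓ ∈ stdSimplex ℝ I := by
  intro ℓ
  constructor
  · intro i; unfold unifStrat; positivity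
  · unfold unifStrat
    rw [Finset.sum_const, Finset.card_univ, nsmul_eq_mul]
    rw [mul_inv_cancel₀]
    exact_mod_cast Fintype.card_ne_zero

lemma bellSet_nonempty : (bellSet M G W δ ξ).Nonempty :=
  ⟨_, unifStrat K I, unifStrat_mem, rfl⟩

lemma bellSet_bddAbove (hM : IsStochastic M) (hδ : δ ∈ Set.Ico (0:ℝ) 1)
    (hGC : ∀ ℓ i j, G ℓ i j ≤ C)
    (hW : ∀ ζ ∈ stdSimplex ℝ K, 0 ≤ W ζ ∧ W ζ ≤ C)
    (hξ : ξ ∈ stdSimplex ℝ K) (hC0 : 0 ≤ C) : BddAbove (bellSet M G W δ ξ) := by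
  refine ⟨C, fun x hx => ?_⟩
  obtain ⟨χ, hχ, rfl⟩ := hx
  exact bellExpr_le hM hδ hGC hW hξ hC0 hχ

end Bell


section Conc
variable {K I J : Type*} [Fintype K] [Nonempty K] [DecidableEq K]
  [Fintype I] [Nonempty I] [Fintype J] [Nonempty J]
variable {M : Matrix K K ℝ} {G : K → I → J → ℝ} {C : ℝ} {Vd : (K → ℝ) → ℝ} {δ : ℝ}

/-- convex combinations of simplex points lie in the simplex -/
lemma comb_mem {lam : K → ℝ} {ζ : K → (K → ℝ)} (hlam0 : ∀ l, 0 ≤ lam l)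
    (hlam1 : ∑ l, lam l = 1) (hζ : ∀ l, ζ l ∈ stdSimplex ℝ K) :
    (∑ l, lam l • ζ l) ∈ stdSimplex ℝ K := by
  have heval : ∀ k, (∑ l, lam l • ζ l) k = ∑ l, lam l * ζ l k := by
    intro k; rw [Finset.sum_apply]; rfl
  constructor
  · intro k; rw [heval]
    exact Finset.sum_nonneg fun l _ => mul_nonneg (hlam0 l) ((hζ l).1 k)
  · simp_rw [heval]
    rw [Finset.sum_comm]
    have : ∀ l, ∑ k, lam l * ζ l k = lam l := by
      intro l; rw [← Finset.mul_sum, (hζ l).2, mul_one]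
    simp_rw [this]; exact hlam1

theorem value_concave
    (hM : IsStochastic M) (hδ : δ ∈ Set.Ico (0:ℝ) 1)
    (hG0 : ∀ ℓ i j, 0 ≤ G ℓ i j) (hGC : ∀ ℓ i j, G ℓ i j ≤ C) (hC0 : 0 ≤ C)
    (p0 : K → ℝ) (hp0 : p0 ∈ stdSimplex ℝ K)
    (hVb : ∀ ξ ∈ stdSimplex ℝ K, 0 ≤ Vd ξ ∧ Vd ξ ≤ C)
    (hVeq : ∀ ξ ∈ stdSimplex ℝ K, Vd ξ = sSup (bellSet M G Vd δ ξ))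
    (lam : K → ℝ) (hlam0 : ∀ l, 0 ≤ lam l) (hlam1 : ∑ l, lam l = 1)
    (ζ : K → (K → ℝ)) (hζ : ∀ l, ζ l ∈ stdSimplex ℝ K) :
    ∑ l, lam l * Vd (ζ l) ≤ Vd (∑ l, lam l • ζ l) := by
  classical
  -- the defect set
  set S : Set ℝ := { d : ℝ | ∃ lam' : K → ℝ, ∃ ζ' : K → (K → ℝ),
    (∀ l, 0 ≤ lam' l) ∧ (∑ l, lam' l = 1) ∧ (∀ l, ζ' l ∈ stdSimplex ℝ K) ∧
    d = ∑ l, lam' l * Vd (ζ' l) - Vd (∑ l, lam' l • ζ' l) } with hSdef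
  have hcard : (0:ℝ) < (Fintype.card K : ℝ) := by
    exact_mod_cast Fintype.card_pos
  have hmemS : ∀ (lam' : K → ℝ) (ζ' : K → (K → ℝ)), (∀ l, 0 ≤ lam' l) →
      (∑ l, lam' l = 1) → (∀ l, ζ' l ∈ stdSimplex ℝ K) →
      (∑ l, lam' l * Vd (ζ' l) - Vd (∑ l, lam' l • ζ' l)) ∈ S := by
    intro lam' ζ' h0 h1 h2
    exact ⟨lam', ζ', h0, h1, h2, rfl⟩
  have hzero : (0:ℝ) ∈ S := by
    have h0 : ∀ l : K, 0 ≤ ((Fintype.card K : ℝ)⁻¹) := fun _ => by positivity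
    have h1 : ∑ _l : K, ((Fintype.card K : ℝ)⁻¹) = 1 := by
      rw [Finset.sum_const, Finset.card_univ, nsmul_eq_mul, mul_inv_cancel₀ hcard.ne']
    have := hmemS (fun _ => (Fintype.card K : ℝ)⁻¹) (fun _ => p0) h0 h1 (fun _ => hp0)
    have heq : ∑ _l : K, ((Fintype.card K : ℝ)⁻¹) * Vd p0 = Vd p0 := by
      rw [← Finset.sum_mul, h1, one_mul]
    have heq2 : (∑ _l : K, ((Fintype.card K : ℝ)⁻¹) • p0) = p0 := by
      rw [← Finset.sum_smul, h1, one_smul]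
    rw [heq, heq2, sub_self] at this
    exact this
  have hSne : S.Nonempty := ⟨0, hzero⟩
  have hSbdd : BddAbove S := by
    refine ⟨C, fun d hd => ?_⟩
    obtain ⟨lam', ζ', h0, h1, h2, rfl⟩ := hd
    have hub : ∑ l, lam' l * Vd (ζ' l) ≤ C := by
      calc ∑ l, lam' l * Vd (ζ' l) ≤ ∑ l, lam' l * C :=
            Finset.sum_le_sum fun l _ =>
              mul_le_mul_of_nonneg_left (hVb _ (h2 l)).2 (h0 l)
        _ = C := by rw [← Finset.sum_mul, h1, one_mul]
    have hlb : 0 ≤ Vd (∑ l, lam' l • ζ' l) := (hVb _ (comb_mem h0 h1 h2)).1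
    linarith
  set d₀ := sSup S with hd₀
  have hd₀0 : 0 ≤ d₀ := le_csSup hSbdd hzero
  -- main contraction estimate
  have key : ∀ ε : ℝ, 0 < ε → d₀ ≤ δ * d₀ + 2 * ε := by
    intro ε hε
    obtain ⟨d, hdS, hdgt⟩ := exists_lt_of_lt_csSup hSne (show d₀ - ε < d₀ by linarith)
    obtain ⟨lam, ζ, hlam0, hlam1, hζ, rfl⟩ := hdS
    set ξ : K → ℝ := ∑ l, lam l • ζ l with hξdef
    have hξΔ : ξ ∈ stdSimplex ℝ K := comb_mem hlam0 hlam1 hζ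
    have hξeval : ∀ ℓ, ξ ℓ = ∑ l, lam l * ζ l ℓ := by
      intro ℓ; rw [hξdef, Finset.sum_apply]; rfl
    have hξ0 : ∀ ℓ, 0 ≤ ξ ℓ := hξΔ.1
    -- choose ε-optimal strategies at each ζ l
    have hex : ∀ l : K, ∃ χ : K → I → ℝ, (∀ ℓ, χ ℓ ∈ stdSimplex ℝ I) ∧
        Vd (ζ l) ≤ bellExpr M G Vd δ (ζ l) χ + ε := by
      intro l
      have heq := hVeq (ζ l) (hζ l)
      have : Vd (ζ l) - ε < sSup (bellSet M G Vd δ (ζ l)) := by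
        rw [← heq]; linarith
      obtain ⟨x, hx, hgt⟩ := exists_lt_of_lt_csSup bellSet_nonempty this
      obtain ⟨χ, hχ, rfl⟩ := hx
      exact ⟨χ, hχ, by linarith⟩
    choose χf hχfΔ hχfle using hex
    have hχf0 : ∀ l ℓ i, 0 ≤ χf l ℓ i := fun l ℓ i => (hχfΔ l ℓ).1 i
    have hζ0 : ∀ l ℓ, 0 ≤ ζ l ℓ := fun l => (hζ l).1
    -- the combined strategy
    set χ : K → I → ℝ := fun ℓ i =>
      if ξ ℓ = 0 then (Fintype.card I : ℝ)⁻¹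
      else (∑ l, lam l * ζ l ℓ * χf l ℓ i) / ξ ℓ with hχdef
    have hzero_term : ∀ ℓ, ξ ℓ = 0 → ∀ l, lam l * ζ l ℓ = 0 := by
      intro ℓ h l
      have hnn : ∀ l ∈ Finset.univ, 0 ≤ lam l * ζ l ℓ :=
        fun l _ => mul_nonneg (hlam0 l) (hζ0 l ℓ)
      have := (Finset.sum_eq_zero_iff_of_nonneg hnn).1 (by rw [← hξeval ℓ]; exact h)
      exact this l (Finset.mem_univ l)
    have hF1 : ∀ ℓ i, ξ ℓ * χ ℓ i = ∑ l, lam l * ζ l ℓ * χf l ℓ i := by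
      intro ℓ i
      by_cases h : ξ ℓ = 0
      · rw [h, zero_mul]
        symm
        refine Finset.sum_eq_zero fun l _ => ?_
        rw [hzero_term ℓ h l, zero_mul]
      · rw [hχdef]; simp only [h, if_false]
        field_simp
    have hχΔ : ∀ ℓ, χ ℓ ∈ stdSimplex ℝ I := by
      intro ℓ
      by_cases h : ξ ℓ = 0
      · constructor
        · intro i; rw [hχdef]; simp only [h, if_true]; positivity
        · rw [hχdef]; simp only [h, if_true]
          rw [Finset.sum_const, Finset.card_univ, nsmul_eq_mul, mul_inv_cancel₀]
          exact_mod_cast Fintype.card_ne_zero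
      · have hpos : 0 < ξ ℓ := lt_of_le_of_ne (hξ0 ℓ) (Ne.symm h)
        constructor
        · intro i; rw [hχdef]; simp only [h, if_false]
          refine div_nonneg (Finset.sum_nonneg fun l _ => ?_) hpos.le
          exact mul_nonneg (mul_nonneg (hlam0 l) (hζ0 l ℓ)) (hχf0 l ℓ i)
        · rw [hχdef]; simp only [h, if_false]
          rw [← Finset.sum_div]
          rw [Finset.sum_comm]
          have : ∀ l, ∑ i, lam l * ζ l ℓ * χf l ℓ i = lam l * ζ l ℓ := by
            intro l; rw [← Finset.mul_sum, (hχfΔ l ℓ).2, mul_one]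
          simp_rw [this]
          rw [← hξeval ℓ, div_self h]
    have hχ0 : ∀ ℓ i, 0 ≤ χ ℓ i := fun ℓ i => (hχΔ ℓ).1 i
    -- F3 : action probabilities combine
    have hF3 : ∀ a, actionProb ξ χ a = ∑ l, lam l * actionProb (ζ l) (χf l) a := by
      intro a
      unfold actionProb
      simp_rw [hF1]
      rw [Finset.sum_comm]
      refine Finset.sum_congr rfl fun l _ => ?_
      rw [Finset.mul_sum]
      exact Finset.sum_congr rfl fun ℓ _ => by ring
    -- F4 : one-stage payoff superadditivity
    have hF4 : ∑ l, lam l * onestagePayoff G (ζ l) (χf l) ≤ onestagePayoff G ξ χ := by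
      unfold onestagePayoff
      refine le_ciInf fun j => ?_
      have hrew : ∑ ℓ, ξ ℓ * ∑ i, χ ℓ i * G ℓ i j
          = ∑ l, lam l * ∑ ℓ, ζ l ℓ * ∑ i, χf l ℓ i * G ℓ i j := by
        have step1 : ∑ ℓ, ξ ℓ * ∑ i, χ ℓ i * G ℓ i j
            = ∑ ℓ, ∑ i, ∑ l, lam l * ζ l ℓ * χf l ℓ i * G ℓ i j := by
          refine Finset.sum_congr rfl fun ℓ _ => ?_
          rw [Finset.mul_sum]
          refine Finset.sum_congr rfl fun i _ => ?_
          rw [show ξ ℓ * (χ ℓ i * G ℓ i j) = (ξ ℓ * χ ℓ i) * G ℓ i j by ring,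
            hF1 ℓ i, Finset.sum_mul]
        have step2 : ∑ l, lam l * ∑ ℓ, ζ l ℓ * ∑ i, χf l ℓ i * G ℓ i j
            = ∑ l, ∑ ℓ, ∑ i, lam l * ζ l ℓ * χf l ℓ i * G ℓ i j := by
          refine Finset.sum_congr rfl fun l _ => ?_
          rw [Finset.mul_sum]
          refine Finset.sum_congr rfl fun ℓ _ => ?_
          rw [show lam l * (ζ l ℓ * ∑ i, χf l ℓ i * G ℓ i j)
              = (lam l * ζ l ℓ) * ∑ i, χf l ℓ i * G ℓ i j by ring, Finset.mul_sum]
          exact Finset.sum_congr rfl fun i _ => by ring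
        rw [step1, step2]
        calc ∑ ℓ, ∑ i, ∑ l, lam l * ζ l ℓ * χf l ℓ i * G ℓ i j
            = ∑ ℓ, ∑ l, ∑ i, lam l * ζ l ℓ * χf l ℓ i * G ℓ i j :=
              Finset.sum_congr rfl fun ℓ _ => Finset.sum_comm
          _ = ∑ l, ∑ ℓ, ∑ i, lam l * ζ l ℓ * χf l ℓ i * G ℓ i j := Finset.sum_comm
      rw [hrew]
      refine Finset.sum_le_sum fun l _ => ?_
      refine mul_le_mul_of_nonneg_left ?_ (hlam0 l)
      exact ciInf_le (Set.Finite.bddBelow (Set.finite_range _)) j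
    -- Bellman lower bound at ξ
    have hVξ : bellExpr M G Vd δ ξ χ ≤ Vd ξ := by
      rw [hVeq ξ hξΔ]
      exact le_csSup (bellSet_bddAbove hM hδ hGC hVb hξΔ hC0) ⟨χ, hχΔ, rfl⟩
    -- per-action estimate using the defect bound
    have hact : ∀ a : I,
        ∑ l, lam l * (actionProb (ζ l) (χf l) a *
            Vd (Matrix.vecMul (posterior (ζ l) (χf l) a) M))
          ≤ actionProb ξ χ a * Vd (Matrix.vecMul (posterior ξ χ a) M)
            + actionProb ξ χ a * d₀ := by
      intro a
      have hqeq := hF3 a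
      by_cases hq : actionProb ξ χ a = 0
      · have hterms : ∀ l, lam l * actionProb (ζ l) (χf l) a = 0 := by
          have hnn : ∀ l ∈ Finset.univ, (0:ℝ) ≤ lam l * actionProb (ζ l) (χf l) a :=
            fun l _ => mul_nonneg (hlam0 l) (actionProb_nonneg (hζ0 l) (hχf0 l) a)
          have hs : ∑ l, lam l * actionProb (ζ l) (χf l) a = 0 := by
            rw [← hqeq]; exact hq
          intro l
          exact (Finset.sum_eq_zero_iff_of_nonneg hnn).1 hs l (Finset.mem_univ l)
        have hL : ∑ l, lam l * (actionProb (ζ l) (χf l) a *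
            Vd (Matrix.vecMul (posterior (ζ l) (χf l) a) M)) = 0 := by
          refine Finset.sum_eq_zero fun l _ => ?_
          rw [show lam l * (actionProb (ζ l) (χf l) a *
              Vd (Matrix.vecMul (posterior (ζ l) (χf l) a) M))
              = (lam l * actionProb (ζ l) (χf l) a) *
                Vd (Matrix.vecMul (posterior (ζ l) (χf l) a) M) by ring, hterms l,
            zero_mul]
        rw [hL, hq, zero_mul, zero_mul, add_zero]
      · have hqpos : 0 < actionProb ξ χ a :=
          lt_of_le_of_ne (actionProb_nonneg hξ0 hχ0 a) (Ne.symm hq)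
        set q := actionProb ξ χ a with hqdef
        set lam' : K → ℝ := fun l => lam l * actionProb (ζ l) (χf l) a / q with hlam'def
        set ζ' : K → (K → ℝ) := fun l =>
          if actionProb (ζ l) (χf l) a = 0 then p0
          else Matrix.vecMul (posterior (ζ l) (χf l) a) M with hζ'def
        have hlam'0 : ∀ l, 0 ≤ lam' l := fun l =>
          div_nonneg (mul_nonneg (hlam0 l) (actionProb_nonneg (hζ0 l) (hχf0 l) a))
            hqpos.le
        have hlam'1 : ∑ l, lam' l = 1 := by
          rw [hlam'def]
          simp only
          rw [← Finset.sum_div, ← hqeq, div_self hq]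
        have hζ'Δ : ∀ l, ζ' l ∈ stdSimplex ℝ K := by
          intro l
          rw [hζ'def]
          by_cases h : actionProb (ζ l) (χf l) a = 0
          · simp only [h, if_true]; exact hp0
          · simp only [h, if_false]
            exact vecMul_mem_simplex hM (posterior_mem (hζ0 l) (hχf0 l) h)
        have hbary : (∑ l, lam' l • ζ' l) = Matrix.vecMul (posterior ξ χ a) M := by
          funext k
          have heval : (∑ l, lam' l • ζ' l) k = ∑ l, lam' l * ζ' l k := by
            rw [Finset.sum_apply]; rfl
          rw [heval]
          have hVM : ∀ v : K → ℝ, Matrix.vecMul v M k = ∑ ℓ, v ℓ * M ℓ k := by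
            intro v; simp [Matrix.vecMul, dotProduct]
          have hterm : ∀ l, lam' l * ζ' l k
              = ∑ ℓ, (lam l * ζ l ℓ * χf l ℓ a / q) * M ℓ k := by
            intro l
            by_cases h : actionProb (ζ l) (χf l) a = 0
            · have h0 : lam' l = 0 := by
                rw [hlam'def]; simp only; rw [h, mul_zero, zero_div]
              rw [h0, zero_mul]
              symm
              refine Finset.sum_eq_zero fun ℓ _ => ?_
              rw [show lam l * ζ l ℓ * χf l ℓ a = lam l * (ζ l ℓ * χf l ℓ a) by ring,
                term_zero_of_actionProb_zero (hζ0 l) (hχf0 l) h ℓ, mul_zero, zero_div,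
                zero_mul]
            · rw [hζ'def]
              simp only [h, if_false]
              rw [hVM, Finset.mul_sum]
              refine Finset.sum_congr rfl fun ℓ _ => ?_
              rw [hlam'def]
              simp only
              unfold posterior
              field_simp
          simp_rw [hterm]
          rw [Finset.sum_comm, hVM]
          refine Finset.sum_congr rfl fun ℓ _ => ?_
          rw [← Finset.sum_mul, ← Finset.sum_div, ← hF1 ℓ a]
          unfold posterior
          rw [← hqdef]
        have hmem := hmemS lam' ζ' hlam'0 hlam'1 hζ'Δ
        rw [hbary] at hmem
        have hdle : ∑ l, lam' l * Vd (ζ' l)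
            - Vd (Matrix.vecMul (posterior ξ χ a) M) ≤ d₀ := le_csSup hSbdd hmem
        have hid : ∑ l, lam l * (actionProb (ζ l) (χf l) a *
            Vd (Matrix.vecMul (posterior (ζ l) (χf l) a) M))
            = q * ∑ l, lam' l * Vd (ζ' l) := by
          rw [Finset.mul_sum]
          refine Finset.sum_congr rfl fun l _ => ?_
          by_cases h : actionProb (ζ l) (χf l) a = 0
          · have h0 : lam' l = 0 := by
              rw [hlam'def]; simp only; rw [h, mul_zero, zero_div]
            simp only [h, h0, zero_mul, mul_zero]
          · rw [hζ'def]
            simp only [h, if_false]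
            rw [hlam'def]
            simp only
            field_simp
        rw [hid]
        nlinarith [hdle, hqpos]
    -- assembly
    have hsum1 : ∑ l, lam l * Vd (ζ l)
        ≤ ∑ l, lam l * bellExpr M G Vd δ (ζ l) (χf l) + ε := by
      have : ∑ l, lam l * Vd (ζ l)
          ≤ ∑ l, lam l * (bellExpr M G Vd δ (ζ l) (χf l) + ε) :=
        Finset.sum_le_sum fun l _ => mul_le_mul_of_nonneg_left (hχfle l) (hlam0 l)
      refine le_trans this (le_of_eq ?_)
      simp_rw [mul_add]
      rw [Finset.sum_add_distrib, ← Finset.sum_mul, hlam1, one_mul]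
    have hexpand : ∑ l, lam l * bellExpr M G Vd δ (ζ l) (χf l)
        = (1 - δ) * (∑ l, lam l * onestagePayoff G (ζ l) (χf l))
          + δ * ∑ a, ∑ l, lam l * (actionProb (ζ l) (χf l) a *
              Vd (Matrix.vecMul (posterior (ζ l) (χf l) a) M)) := by
      unfold bellExpr
      simp_rw [mul_add]
      rw [Finset.sum_add_distrib]
      congr 1
      · rw [Finset.mul_sum]
        exact Finset.sum_congr rfl fun l _ => by ring
      · simp_rw [Finset.mul_sum]
        rw [Finset.sum_comm]
        exact Finset.sum_congr rfl fun a _ => Finset.sum_congr rfl fun l _ => by ring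
    have hcont : ∑ a, ∑ l, lam l * (actionProb (ζ l) (χf l) a *
          Vd (Matrix.vecMul (posterior (ζ l) (χf l) a) M))
        ≤ (∑ a, actionProb ξ χ a * Vd (Matrix.vecMul (posterior ξ χ a) M)) + d₀ := by
      calc ∑ a, ∑ l, lam l * (actionProb (ζ l) (χf l) a *
              Vd (Matrix.vecMul (posterior (ζ l) (χf l) a) M))
          ≤ ∑ a, (actionProb ξ χ a * Vd (Matrix.vecMul (posterior ξ χ a) M)
              + actionProb ξ χ a * d₀) := Finset.sum_le_sum fun a _ => hact a
        _ = (∑ a, actionProb ξ χ a * Vd (Matrix.vecMul (posterior ξ χ a) M)) + d₀ := by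
            rw [Finset.sum_add_distrib, ← Finset.sum_mul, sum_actionProb hξΔ hχΔ,
              one_mul]
    have hbell : bellExpr M G Vd δ ξ χ
        = (1 - δ) * onestagePayoff G ξ χ
          + δ * ∑ a, actionProb ξ χ a * Vd (Matrix.vecMul (posterior ξ χ a) M) := rfl
    have h1δ : (0:ℝ) ≤ 1 - δ := by have := hδ.2; linarith
    have hδ0 : (0:ℝ) ≤ δ := hδ.1
    have hr := mul_le_mul_of_nonneg_left hF4 h1δ
    have hc := mul_le_mul_of_nonneg_left hcont hδ0
    linarith [hdgt, hsum1, hexpand, hVξ, hr, hc]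
  -- conclude d₀ ≤ 0
  have hd₀neg : d₀ ≤ 0 := by
    have h1δ : 0 < 1 - δ := by have := hδ.2; linarith
    by_contra hpos
    push_neg at hpos
    have := key ((1 - δ) * d₀ / 4) (by positivity)
    nlinarith
  have := hmemS lam ζ hlam0 hlam1 hζ
  have hle : ∑ l, lam l * Vd (ζ l) - Vd (∑ l, lam l • ζ l) ≤ d₀ := le_csSup hSbdd this
  linarith

end Conc


section LemB
variable {K : Type*} [Fintype K] [Nonempty K] [DecidableEq K]
variable {Vd : (K → ℝ) → ℝ} {πM : K → ℝ} {ξs : K → (K → ℝ)} {γ : K → ℝ}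

/-- extraction of convex coordinates from hull membership -/
lemma hull_coords (haff : AffineIndependent ℝ ξs) {x : K → ℝ}
    (hx : x ∈ convexHull ℝ (Set.range ξs)) :
    ∃ b : K → ℝ, (∀ l, 0 ≤ b l) ∧ (∑ l, b l = 1) ∧ (∑ l, b l • ξs l = x) := by
  classical
  have hrange : Set.range ξs = ↑(Finset.univ.image ξs) := by
    rw [Finset.coe_image, Finset.coe_univ, Set.image_univ]
  rw [hrange, Finset.convexHull_eq] at hx
  obtain ⟨w, hw0, hw1, hcm⟩ := hx
  have hinj : Function.Injective ξs := haff.injective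
  refine ⟨fun l => w (ξs l), ?_, ?_, ?_⟩
  · intro l
    exact hw0 _ (Finset.mem_image_of_mem _ (Finset.mem_univ l))
  · rw [← hw1]
    exact (Finset.sum_image (fun a _ b _ h => hinj h)).symm
  · rw [← hcm, Finset.centerMass_eq_of_sum_1 _ _ hw1]
    rw [Finset.sum_image (fun a _ b _ h => hinj h)]
    rfl

lemma coords_unique (haff : AffineIndependent ℝ ξs) {t : K → ℝ}
    (ht1 : ∑ l, t l = 1) (hγ1 : ∑ l, γ l = 1)
    (heq : ∑ l, t l • ξs l = ∑ l, γ l • ξs l) : t = γ := by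
  classical
  rw [affineIndependent_iff] at haff
  have h0 : ∑ l, (t l - γ l) = 0 := by
    rw [Finset.sum_sub_distrib, ht1, hγ1, sub_self]
  have hs : ∑ l, (t l - γ l) • ξs l = 0 := by
    simp_rw [sub_smul]
    rw [Finset.sum_sub_distrib, heq, sub_self]
  have := haff Finset.univ (fun l => t l - γ l) h0 hs
  funext l
  have h2 : t l - γ l = 0 := this l (Finset.mem_univ l)
  linarith

theorem weighted_lb
    (haff : AffineIndependent ℝ ξs)
    (hγ1 : ∑ l, γ l = 1)
    (hγπ : πM = ∑ l, γ l • ξs l)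
    (hconc : ∀ (lam : K → ℝ), (∀ l, 0 ≤ lam l) → (∑ l, lam l = 1) →
      ∑ l, lam l * Vd (ξs l) ≤ Vd (∑ l, lam l • ξs l))
    {ι : Type*} [Fintype ι] (w : ι → ℝ) (pt : ι → (K → ℝ))
    (hw0 : ∀ x, 0 ≤ w x) (hw1 : ∑ x, w x = 1)
    (hpthull : ∀ x, pt x ∈ convexHull ℝ (Set.range ξs))
    (hbary : ∑ x, w x • pt x = πM) :
    ∑ l, γ l * Vd (ξs l) ≤ ∑ x, w x * Vd (pt x) := by
  classical
  have hcoords : ∀ x : ι, ∃ b : K → ℝ, (∀ l, 0 ≤ b l) ∧ (∑ l, b l = 1) ∧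
      (∑ l, b l • ξs l = pt x) := fun x => hull_coords haff (hpthull x)
  choose b hb0 hb1 hbpt using hcoords
  -- aggregated coordinates
  set t : K → ℝ := fun l => ∑ x, w x * b x l with htdef
  have ht1 : ∑ l, t l = 1 := by
    rw [htdef]
    simp only
    rw [Finset.sum_comm]
    have : ∀ x, ∑ l, w x * b x l = w x := by
      intro x; rw [← Finset.mul_sum, hb1 x, mul_one]
    simp_rw [this]; exact hw1
  have htbary : ∑ l, t l • ξs l = ∑ l, γ l • ξs l := by
    rw [← hγπ, ← hbary, htdef]
    simp only
    calc ∑ l, (∑ x, w x * b x l) • ξs l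
        = ∑ l, ∑ x, (w x * b x l) • ξs l := by
          refine Finset.sum_congr rfl fun l _ => ?_
          rw [Finset.sum_smul]
      _ = ∑ x, ∑ l, (w x * b x l) • ξs l := Finset.sum_comm
      _ = ∑ x, w x • pt x := by
          refine Finset.sum_congr rfl fun x _ => ?_
          rw [← hbpt x, Finset.smul_sum]
          refine Finset.sum_congr rfl fun l _ => ?_
          rw [mul_smul]
  have htγ : t = γ := coords_unique haff ht1 hγ1 htbary
  calc ∑ l, γ l * Vd (ξs l) = ∑ l, t l * Vd (ξs l) := by rw [htγ]
    _ = ∑ l, ∑ x, (w x * b x l) * Vd (ξs l) := by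
        refine Finset.sum_congr rfl fun l _ => ?_
        rw [htdef]
        simp only
        rw [Finset.sum_mul]
    _ = ∑ x, ∑ l, (w x * b x l) * Vd (ξs l) := Finset.sum_comm
    _ = ∑ x, w x * ∑ l, b x l * Vd (ξs l) := by
        refine Finset.sum_congr rfl fun x _ => ?_
        rw [Finset.mul_sum]
        exact Finset.sum_congr rfl fun l _ => by ring
    _ ≤ ∑ x, w x * Vd (pt x) := by
        refine Finset.sum_le_sum fun x _ => ?_
        refine mul_le_mul_of_nonneg_left ?_ (hw0 x)
        have := hconc (b x) (hb0 x) (hb1 x)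
        rw [hbpt x] at this
        exact this

end LemB


section Stream
variable {K I : Type*} [Fintype K] [Nonempty K] [DecidableEq K] [Fintype I] [Nonempty I]

variable (M : Matrix K K ℝ) (πM : K → ℝ) (F : (K → ℝ) → K → I → ℝ)

/-- one-step transition of the posterior-after-M process -/
def stepPt (x : K → ℝ) (a : I) : K → ℝ :=
  if actionProb x (F x) a = 0 then πM else Matrix.vecMul (posterior x (F x) a) M

/-- the point reached after history f -/
def trajPt : (K → ℝ) → (m : ℕ) → (Fin m → I) → (K → ℝ)
  | x, 0, _ => x
  | x, (m+1), f => trajPt (stepPt M πM F x (f 0)) m (Fin.tail f)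

/-- the probability of history f -/
def trajWt : (K → ℝ) → (m : ℕ) → (Fin m → I) → ℝ
  | _, 0, _ => 1
  | x, (m+1), f => actionProb x (F x) (f 0) *
      trajWt (stepPt M πM F x (f 0)) m (Fin.tail f)

lemma trajPt_zero (x : K → ℝ) (f : Fin 0 → I) : trajPt M πM F x 0 f = x := rfl

lemma trajPt_succ (x : K → ℝ) (m : ℕ) (a : I) (g : Fin m → I) :
    trajPt M πM F x (m+1) (Fin.cons a g) = trajPt M πM F (stepPt M πM F x a) m g := by
  have ht : Fin.tail (Fin.cons a g : Fin (m+1) → I) = g := by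
    funext i; simp [Fin.tail, Fin.cons_succ]
  simp only [trajPt, Fin.cons_zero, ht]

lemma trajWt_zero (x : K → ℝ) (f : Fin 0 → I) : trajWt M πM F x 0 f = 1 := rfl

lemma trajWt_succ (x : K → ℝ) (m : ℕ) (a : I) (g : Fin m → I) :
    trajWt M πM F x (m+1) (Fin.cons a g)
      = actionProb x (F x) a * trajWt M πM F (stepPt M πM F x a) m g := by
  have ht : Fin.tail (Fin.cons a g : Fin (m+1) → I) = g := by
    funext i; simp [Fin.tail, Fin.cons_succ]
  simp only [trajWt, Fin.cons_zero, ht]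

/-- reindexing sums over histories -/
lemma sum_hist_succ {β : Type*} [AddCommMonoid β] (m : ℕ) (g : (Fin (m+1) → I) → β) :
    ∑ f : Fin (m+1) → I, g f = ∑ a : I, ∑ f' : Fin m → I, g (Fin.cons a f') := by
  rw [← Equiv.sum_comp (Fin.consEquiv (fun _ : Fin (m+1) => I)) g, Fintype.sum_prod_type]
  rfl

lemma sum_hist_zero {β : Type*} [AddCommMonoid β] (g : (Fin 0 → I) → β) :
    ∑ f : Fin 0 → I, g f = g (fun i => i.elim0) := by
  rw [Fintype.sum_unique]
  congr


section Facts
variable {H : Set (K → ℝ)}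
variable (hM : IsStochastic M) (hπΔ : πM ∈ stdSimplex ℝ K)
  (hF : ∀ x ℓ, F x ℓ ∈ stdSimplex ℝ I)

lemma stepPt_mem_simplex (hM : IsStochastic M) (hπΔ : πM ∈ stdSimplex ℝ K)
    (hF : ∀ x ℓ, F x ℓ ∈ stdSimplex ℝ I) {x : K → ℝ} (hx : x ∈ stdSimplex ℝ K) (a : I) :
    stepPt M πM F x a ∈ stdSimplex ℝ K := by
  unfold stepPt
  by_cases h : actionProb x (F x) a = 0
  · simp only [h, if_true]; exact hπΔ
  · simp only [h, if_false]
    exact vecMul_mem_simplex hM (posterior_mem hx.1 (fun ℓ i => (hF x ℓ).1 i) h)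

lemma stepPt_mem_H (hπH : πM ∈ H)
    (hconv : ∀ ξ ∈ stdSimplex ℝ K, Matrix.vecMul ξ M ∈ H)
    (hF : ∀ x ℓ, F x ℓ ∈ stdSimplex ℝ I) {x : K → ℝ} (hx : x ∈ stdSimplex ℝ K) (a : I) :
    stepPt M πM F x a ∈ H := by
  unfold stepPt
  by_cases h : actionProb x (F x) a = 0
  · simp only [h, if_true]; exact hπH
  · simp only [h, if_false]
    exact hconv _ (posterior_mem hx.1 (fun ℓ i => (hF x ℓ).1 i) h)

lemma trajPt_mem_simplex (hM : IsStochastic M) (hπΔ : πM ∈ stdSimplex ℝ K)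
    (hF : ∀ x ℓ, F x ℓ ∈ stdSimplex ℝ I) (m : ℕ) :
    ∀ (x : K → ℝ), x ∈ stdSimplex ℝ K → ∀ f : Fin m → I,
      trajPt M πM F x m f ∈ stdSimplex ℝ K := by
  induction m with
  | zero => intro x hx f; exact hx
  | succ m ih =>
    intro x hx f
    show trajPt M πM F (stepPt M πM F x (f 0)) m (Fin.tail f) ∈ stdSimplex ℝ K
    exact ih _ (stepPt_mem_simplex M πM F hM hπΔ hF hx (f 0)) _

lemma trajPt_mem_H (hM : IsStochastic M) (hπΔ : πM ∈ stdSimplex ℝ K) (hπH : πM ∈ H)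
    (hconv : ∀ ξ ∈ stdSimplex ℝ K, Matrix.vecMul ξ M ∈ H)
    (hF : ∀ x ℓ, F x ℓ ∈ stdSimplex ℝ I) (m : ℕ) :
    ∀ (x : K → ℝ), x ∈ stdSimplex ℝ K → x ∈ H → ∀ f : Fin m → I,
      trajPt M πM F x m f ∈ H := by
  induction m with
  | zero => intro x hx hxH f; exact hxH
  | succ m ih =>
    intro x hx hxH f
    show trajPt M πM F (stepPt M πM F x (f 0)) m (Fin.tail f) ∈ H
    exact ih _ (stepPt_mem_simplex M πM F hM hπΔ hF hx (f 0))
      (stepPt_mem_H M πM F hπH hconv hF hx (f 0)) _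

lemma trajWt_nonneg (hM : IsStochastic M) (hπΔ : πM ∈ stdSimplex ℝ K)
    (hF : ∀ x ℓ, F x ℓ ∈ stdSimplex ℝ I) (m : ℕ) :
    ∀ (x : K → ℝ), x ∈ stdSimplex ℝ K → ∀ f : Fin m → I, 0 ≤ trajWt M πM F x m f := by
  induction m with
  | zero => intro x hx f; rw [trajWt_zero]; norm_num
  | succ m ih =>
    intro x hx f
    show 0 ≤ actionProb x (F x) (f 0) * trajWt M πM F (stepPt M πM F x (f 0)) m (Fin.tail f)
    exact mul_nonneg (actionProb_nonneg hx.1 (fun ℓ i => (hF x ℓ).1 i) (f 0))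
      (ih _ (stepPt_mem_simplex M πM F hM hπΔ hF hx (f 0)) _)

lemma sum_trajWt (hM : IsStochastic M) (hπΔ : πM ∈ stdSimplex ℝ K)
    (hF : ∀ x ℓ, F x ℓ ∈ stdSimplex ℝ I) (m : ℕ) :
    ∀ (x : K → ℝ), x ∈ stdSimplex ℝ K → ∑ f : Fin m → I, trajWt M πM F x m f = 1 := by
  induction m with
  | zero =>
    intro x hx
    rw [sum_hist_zero, trajWt_zero]
  | succ m ih =>
    intro x hx
    rw [sum_hist_succ]
    have : ∀ a : I, ∑ f' : Fin m → I, trajWt M πM F x (m+1) (Fin.cons a f')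
        = actionProb x (F x) a := by
      intro a
      simp_rw [trajWt_succ]
      rw [← Finset.mul_sum, ih _ (stepPt_mem_simplex M πM F hM hπΔ hF hx a), mul_one]
    simp_rw [this]
    exact sum_actionProb hx (hF x)

lemma vecMul_sum_smul {α : Type*} [Fintype α] (c : α → ℝ) (v : α → (K → ℝ))
    (N : Matrix K K ℝ) :
    Matrix.vecMul (∑ a, c a • v a) N = ∑ a, c a • Matrix.vecMul (v a) N := by
  funext k
  have hVM : ∀ w : K → ℝ, Matrix.vecMul w N k = ∑ ℓ, w ℓ * N ℓ k := by
    intro w; simp [Matrix.vecMul, dotProduct]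
  rw [hVM, Finset.sum_apply]
  have : ∀ ℓ, (∑ a, c a • v a) ℓ = ∑ a, c a * v a ℓ := by
    intro ℓ; rw [Finset.sum_apply]; rfl
  simp_rw [this, Finset.sum_mul]
  rw [Finset.sum_comm]
  refine Finset.sum_congr rfl fun a _ => ?_
  rw [Pi.smul_apply, hVM, smul_eq_mul, Finset.mul_sum]
  exact Finset.sum_congr rfl fun ℓ _ => by ring

lemma step_bary (hM : IsStochastic M) (hπΔ : πM ∈ stdSimplex ℝ K)
    (hF : ∀ x ℓ, F x ℓ ∈ stdSimplex ℝ I) {x : K → ℝ} (hx : x ∈ stdSimplex ℝ K) :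
    ∑ a, actionProb x (F x) a • stepPt M πM F x a = Matrix.vecMul x M := by
  funext k
  have hVM : ∀ w : K → ℝ, Matrix.vecMul w M k = ∑ ℓ, w ℓ * M ℓ k := by
    intro w; simp [Matrix.vecMul, dotProduct]
  rw [Finset.sum_apply, hVM]
  have hterm : ∀ a, (actionProb x (F x) a • stepPt M πM F x a) k
      = ∑ ℓ, (x ℓ * F x ℓ a) * M ℓ k := by
    intro a
    rw [Pi.smul_apply, smul_eq_mul]
    by_cases h : actionProb x (F x) a = 0
    · rw [h, zero_mul]
      symm
      refine Finset.sum_eq_zero fun ℓ _ => ?_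
      rw [term_zero_of_actionProb_zero hx.1 (fun ℓ i => (hF x ℓ).1 i) h ℓ, zero_mul]
    · unfold stepPt
      simp only [h, if_false]
      rw [hVM, Finset.mul_sum]
      refine Finset.sum_congr rfl fun ℓ _ => ?_
      unfold posterior
      field_simp
    
  simp_rw [hterm]
  rw [Finset.sum_comm]
  refine Finset.sum_congr rfl fun ℓ _ => ?_
  rw [← Finset.sum_mul, ← Finset.mul_sum, (hF x ℓ).2, mul_one]

lemma traj_bary (hM : IsStochastic M) (hπΔ : πM ∈ stdSimplex ℝ K)
    (hF : ∀ x ℓ, F x ℓ ∈ stdSimplex ℝ I) (m : ℕ) :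
    ∀ (x : K → ℝ), x ∈ stdSimplex ℝ K →
      ∑ f : Fin m → I, trajWt M πM F x m f • trajPt M πM F x m f
        = Matrix.vecMul x (M ^ m) := by
  induction m with
  | zero =>
    intro x hx
    rw [sum_hist_zero, trajWt_zero, trajPt_zero, pow_zero, Matrix.vecMul_one, one_smul]
  | succ m ih =>
    intro x hx
    rw [sum_hist_succ]
    have hstep : ∀ a : I, ∑ f' : Fin m → I,
        trajWt M πM F x (m+1) (Fin.cons a f') • trajPt M πM F x (m+1) (Fin.cons a f')
        = actionProb x (F x) a • Matrix.vecMul (stepPt M πM F x a) (M ^ m) := by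
      intro a
      rw [← ih _ (stepPt_mem_simplex M πM F hM hπΔ hF hx a), Finset.smul_sum]
      refine Finset.sum_congr rfl fun f' _ => ?_
      rw [trajWt_succ, trajPt_succ, mul_smul]
    simp_rw [hstep]
    rw [← vecMul_sum_smul, step_bary M πM F hM hπΔ hF hx, Matrix.vecMul_vecMul,
      ← pow_succ']
end Facts

section Value
variable {J : Type*} [Fintype J] [Nonempty J]
variable (Vd : (K → ℝ) → ℝ) (G : K → I → J → ℝ)

/-- expected value of Vd at stage m starting from x -/
def WxV (x : K → ℝ) (m : ℕ) : ℝ :=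
  ∑ f : Fin m → I, trajWt M πM F x m f * Vd (trajPt M πM F x m f)

/-- expected stage payoff at stage m starting from x -/
def rhoX (x : K → ℝ) (m : ℕ) : ℝ :=
  ∑ f : Fin m → I, trajWt M πM F x m f *
    onestagePayoff G (trajPt M πM F x m f) (F (trajPt M πM F x m f))

lemma WxV_zero (x : K → ℝ) : WxV M πM F Vd x 0 = Vd x := by
  unfold WxV; rw [sum_hist_zero, trajWt_zero, trajPt_zero, one_mul]

lemma WxV_succ (x : K → ℝ) (m : ℕ) : WxV M πM F Vd x (m+1)
    = ∑ a, actionProb x (F x) a * WxV M πM F Vd (stepPt M πM F x a) m := by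
  unfold WxV
  rw [sum_hist_succ]
  refine Finset.sum_congr rfl fun a _ => ?_
  rw [Finset.mul_sum]
  refine Finset.sum_congr rfl fun f' _ => ?_
  rw [trajWt_succ, trajPt_succ]; ring

lemma WxV_one_step (m : ℕ) : ∀ x : K → ℝ,
    WxV M πM F Vd x (m+1) = ∑ f : Fin m → I, trajWt M πM F x m f *
      ∑ a, actionProb (trajPt M πM F x m f) (F (trajPt M πM F x m f)) a *
        Vd (stepPt M πM F (trajPt M πM F x m f) a) := by
  induction m with
  | zero =>
    intro x
    rw [WxV_succ, sum_hist_zero, trajWt_zero, trajPt_zero, one_mul]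
    refine Finset.sum_congr rfl fun a _ => ?_
    rw [WxV_zero]
  | succ m ih =>
    intro x
    rw [WxV_succ]
    simp_rw [ih]
    rw [sum_hist_succ]
    refine Finset.sum_congr rfl fun a _ => ?_
    rw [Finset.mul_sum]
    refine Finset.sum_congr rfl fun f' _ => ?_
    rw [trajWt_succ, trajPt_succ]
    ring

lemma WxV_bounds {C : ℝ} (hM : IsStochastic M) (hπΔ : πM ∈ stdSimplex ℝ K)
    (hF : ∀ x ℓ, F x ℓ ∈ stdSimplex ℝ I)
    (hVb : ∀ y ∈ stdSimplex ℝ K, 0 ≤ Vd y ∧ Vd y ≤ C)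
    {x : K → ℝ} (hx : x ∈ stdSimplex ℝ K) (m : ℕ) :
    0 ≤ WxV M πM F Vd x m ∧ WxV M πM F Vd x m ≤ C := by
  constructor
  · refine Finset.sum_nonneg fun f _ => mul_nonneg (trajWt_nonneg M πM F hM hπΔ hF m x hx f)
      (hVb _ (trajPt_mem_simplex M πM F hM hπΔ hF m x hx f)).1
  · calc WxV M πM F Vd x m
        ≤ ∑ f : Fin m → I, trajWt M πM F x m f * C := by
          refine Finset.sum_le_sum fun f _ => mul_le_mul_of_nonneg_left
            (hVb _ (trajPt_mem_simplex M πM F hM hπΔ hF m x hx f)).2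
            (trajWt_nonneg M πM F hM hπΔ hF m x hx f)
      _ = C := by rw [← Finset.sum_mul, sum_trajWt M πM F hM hπΔ hF m x hx, one_mul]

lemma rhoX_nonneg (hM : IsStochastic M) (hπΔ : πM ∈ stdSimplex ℝ K)
    (hF : ∀ x ℓ, F x ℓ ∈ stdSimplex ℝ I) (hG0 : ∀ ℓ i j, 0 ≤ G ℓ i j)
    {x : K → ℝ} (hx : x ∈ stdSimplex ℝ K) (m : ℕ) :
    0 ≤ rhoX M πM F G x m := by
  refine Finset.sum_nonneg fun f _ => mul_nonneg (trajWt_nonneg M πM F hM hπΔ hF m x hx f) ?_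
  have hy := trajPt_mem_simplex M πM F hM hπΔ hF m x hx f
  exact onestage_nonneg hG0 hy.1 (fun ℓ i => (hF _ ℓ).1 i)

lemma stage_ub (hM : IsStochastic M) (hπΔ : πM ∈ stdSimplex ℝ K)
    (hF : ∀ x ℓ, F x ℓ ∈ stdSimplex ℝ I) {δ ε : ℝ}
    {x : K → ℝ} (hx : x ∈ stdSimplex ℝ K)
    (hpt : ∀ y ∈ stdSimplex ℝ K, Vd y ≤ (1-δ) * onestagePayoff G y (F y)
      + δ * ∑ a, actionProb y (F y) a * Vd (stepPt M πM F y a) + ε) (m : ℕ) :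
    WxV M πM F Vd x m ≤ (1-δ) * rhoX M πM F G x m + δ * WxV M πM F Vd x (m+1) + ε := by
  rw [WxV_one_step]
  unfold WxV rhoX
  have hw0 : ∀ f : Fin m → I, 0 ≤ trajWt M πM F x m f :=
    fun f => trajWt_nonneg M πM F hM hπΔ hF m x hx f
  have hw1 : ∑ f : Fin m → I, trajWt M πM F x m f = 1 := sum_trajWt M πM F hM hπΔ hF m x hx
  calc ∑ f : Fin m → I, trajWt M πM F x m f * Vd (trajPt M πM F x m f)
      ≤ ∑ f : Fin m → I, trajWt M πM F x m f *
          ((1-δ) * onestagePayoff G (trajPt M πM F x m f) (F (trajPt M πM F x m f))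
            + δ * ∑ a, actionProb (trajPt M πM F x m f) (F (trajPt M πM F x m f)) a *
                Vd (stepPt M πM F (trajPt M πM F x m f) a) + ε) :=
        Finset.sum_le_sum fun f _ => mul_le_mul_of_nonneg_left
          (hpt _ (trajPt_mem_simplex M πM F hM hπΔ hF m x hx f)) (hw0 f)
    _ = (1-δ) * ∑ f : Fin m → I, trajWt M πM F x m f *
          onestagePayoff G (trajPt M πM F x m f) (F (trajPt M πM F x m f))
        + δ * ∑ f : Fin m → I, trajWt M πM F x m f *
            ∑ a, actionProb (trajPt M πM F x m f) (F (trajPt M πM F x m f)) a *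
              Vd (stepPt M πM F (trajPt M πM F x m f) a)
        + (∑ f : Fin m → I, trajWt M πM F x m f) * ε := by
        rw [Finset.mul_sum, Finset.mul_sum, Finset.sum_mul, ← Finset.sum_add_distrib,
          ← Finset.sum_add_distrib]
        exact Finset.sum_congr rfl fun f _ => by ring
    _ = _ := by rw [hw1, one_mul]

lemma stage_lb (hM : IsStochastic M) (hπΔ : πM ∈ stdSimplex ℝ K)
    (hF : ∀ x ℓ, F x ℓ ∈ stdSimplex ℝ I) {δ : ℝ}
    {x : K → ℝ} (hx : x ∈ stdSimplex ℝ K)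
    (hpt : ∀ y ∈ stdSimplex ℝ K, (1-δ) * onestagePayoff G y (F y)
      + δ * ∑ a, actionProb y (F y) a * Vd (stepPt M πM F y a) ≤ Vd y) (m : ℕ) :
    (1-δ) * rhoX M πM F G x m + δ * WxV M πM F Vd x (m+1) ≤ WxV M πM F Vd x m := by
  rw [WxV_one_step]
  unfold WxV rhoX
  have hw0 : ∀ f : Fin m → I, 0 ≤ trajWt M πM F x m f :=
    fun f => trajWt_nonneg M πM F hM hπΔ hF m x hx f
  calc (1-δ) * ∑ f : Fin m → I, trajWt M πM F x m f *
          onestagePayoff G (trajPt M πM F x m f) (F (trajPt M πM F x m f))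
        + δ * ∑ f : Fin m → I, trajWt M πM F x m f *
            ∑ a, actionProb (trajPt M πM F x m f) (F (trajPt M πM F x m f)) a *
              Vd (stepPt M πM F (trajPt M πM F x m f) a)
      = ∑ f : Fin m → I, trajWt M πM F x m f *
          ((1-δ) * onestagePayoff G (trajPt M πM F x m f) (F (trajPt M πM F x m f))
            + δ * ∑ a, actionProb (trajPt M πM F x m f) (F (trajPt M πM F x m f)) a *
                Vd (stepPt M πM F (trajPt M πM F x m f) a)) := by
        rw [Finset.mul_sum, Finset.mul_sum, ← Finset.sum_add_distrib]
        exact Finset.sum_congr rfl fun f _ => by ring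
    _ ≤ ∑ f : Fin m → I, trajWt M πM F x m f * Vd (trajPt M πM F x m f) :=
        Finset.sum_le_sum fun f _ => mul_le_mul_of_nonneg_left
          (hpt _ (trajPt_mem_simplex M πM F hM hπΔ hF m x hx f)) (hw0 f)

end Value
end Stream


lemma final_arith (δ₁ δ₂ C w₁ w₂ ε : ℝ) (W₁ W₂ ρ : ℕ → ℝ)
    (h0 : 0 ≤ δ₁) (h12 : δ₁ ≤ δ₂) (h21 : δ₂ < 1) (hC0 : 0 ≤ C) (hε : 0 < ε)
    (hW₁0 : W₁ 0 = w₁) (hW₂0 : W₂ 0 = w₂)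
    (hW₁L : ∀ m, w₁ ≤ W₁ m)
    (hW₂lb : ∀ m, 0 ≤ W₂ m) (hW₁ub : ∀ m, W₁ m ≤ C)
    (hw₁C : w₁ ≤ C)
    (hρ0 : ∀ m, 0 ≤ ρ m)
    (hi : ∀ m, W₁ m ≤ (1-δ₁) * ρ m + δ₁ * W₁ (m+1) + ε)
    (hii : ∀ m, (1-δ₂) * ρ m + δ₂ * W₂ (m+1) ≤ W₂ m) :
    ∀ n : ℕ, w₁ ≤ w₂ + δ₂ ^ n * C + (ε + δ₂ ^ n * C) / (1 - δ₁) := by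
  have hδ₂0 : 0 ≤ δ₂ := le_trans h0 h12
  have h1δ₂ : 0 < 1 - δ₂ := by linarith
  have h1δ₁ : 0 < 1 - δ₁ := by linarith
  have hpow0 : ∀ n : ℕ, 0 ≤ δ₂ ^ n := fun n => pow_nonneg hδ₂0 n
  have hpow1 : ∀ n : ℕ, δ₂ ^ n ≤ 1 := fun n => pow_le_one₀ hδ₂0 h21.le
  -- (a) bounded discounted payoff sums
  have hQ : ∀ n : ℕ, (1-δ₂) * ∑ m ∈ Finset.range n, δ₂ ^ m * ρ m + δ₂ ^ n * W₂ n
      ≤ W₂ 0 := by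
    intro n
    induction n with
    | zero => simp
    | succ n ih =>
      rw [Finset.sum_range_succ]
      have hstep := hii n
      have := mul_le_mul_of_nonneg_left hstep (hpow0 n)
      calc (1-δ₂) * (∑ m ∈ Finset.range n, δ₂ ^ m * ρ m + δ₂ ^ n * ρ n)
            + δ₂ ^ (n+1) * W₂ (n+1)
          = (1-δ₂) * ∑ m ∈ Finset.range n, δ₂ ^ m * ρ m
            + δ₂ ^ n * ((1-δ₂) * ρ n + δ₂ * W₂ (n+1)) := by ring
        _ ≤ (1-δ₂) * ∑ m ∈ Finset.range n, δ₂ ^ m * ρ m + δ₂ ^ n * W₂ n := by linarith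
        _ ≤ W₂ 0 := ih
  have hP1 : ∀ n : ℕ, (1-δ₂) * ∑ m ∈ Finset.range n, δ₂ ^ m * ρ m ≤ w₂ := by
    intro n
    have := hQ n
    have h2 : 0 ≤ δ₂ ^ n * W₂ n := mul_nonneg (hpow0 n) (hW₂lb n)
    rw [hW₂0] at this
    linarith
  -- (b) the unrolled difference estimate
  have hDstep : ∀ m : ℕ, δ₂ * (W₂ (m+1) - W₁ (m+1)) + (δ₂ - δ₁) * (w₁ - ρ m) - ε
      ≤ W₂ m - W₁ m := by
    intro m
    have hA := hi m
    have hB := hii m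
    have hL := hW₁L (m+1)
    nlinarith [hρ0 m]
  have hD : ∀ n : ℕ, δ₂ ^ n * (W₂ n - W₁ n)
      + (δ₂ - δ₁) * ∑ m ∈ Finset.range n, δ₂ ^ m * (w₁ - ρ m)
      - ε * ∑ m ∈ Finset.range n, δ₂ ^ m
      ≤ W₂ 0 - W₁ 0 := by
    intro n
    induction n with
    | zero => simp
    | succ n ih =>
      rw [Finset.sum_range_succ, Finset.sum_range_succ]
      have hstep := hDstep n
      have := mul_le_mul_of_nonneg_left hstep (hpow0 n)
      calc δ₂ ^ (n+1) * (W₂ (n+1) - W₁ (n+1))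
            + (δ₂ - δ₁) * (∑ m ∈ Finset.range n, δ₂ ^ m * (w₁ - ρ m)
                + δ₂ ^ n * (w₁ - ρ n))
            - ε * (∑ m ∈ Finset.range n, δ₂ ^ m + δ₂ ^ n)
          = δ₂ ^ n * (δ₂ * (W₂ (n+1) - W₁ (n+1)) + (δ₂ - δ₁) * (w₁ - ρ n) - ε)
            + (δ₂ - δ₁) * ∑ m ∈ Finset.range n, δ₂ ^ m * (w₁ - ρ m)
            - ε * ∑ m ∈ Finset.range n, δ₂ ^ m := by ring
        _ ≤ δ₂ ^ n * (W₂ n - W₁ n)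
            + (δ₂ - δ₁) * ∑ m ∈ Finset.range n, δ₂ ^ m * (w₁ - ρ m)
            - ε * ∑ m ∈ Finset.range n, δ₂ ^ m := by linarith
        _ ≤ W₂ 0 - W₁ 0 := ih
  -- (c) conclusion
  intro n
  have hgeom : (1-δ₂) * ∑ m ∈ Finset.range n, δ₂ ^ m = 1 - δ₂ ^ n := by
    have := geom_sum_mul δ₂ n
    nlinarith [this]
  have hSw : ∑ m ∈ Finset.range n, δ₂ ^ m * (w₁ - ρ m)
      = w₁ * ∑ m ∈ Finset.range n, δ₂ ^ m - ∑ m ∈ Finset.range n, δ₂ ^ m * ρ m := by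
    rw [Finset.mul_sum, ← Finset.sum_sub_distrib]
    exact Finset.sum_congr rfl fun m _ => by ring
  -- multiply the estimate (b) by (1-δ₂)
  have hDn := hD n
  have hmul := mul_le_mul_of_nonneg_left hDn h1δ₂.le
  -- pieces
  have hp1 : (1-δ₂) * ((δ₂ - δ₁) * ∑ m ∈ Finset.range n, δ₂ ^ m * (w₁ - ρ m))
      ≥ (δ₂ - δ₁) * (w₁ * (1 - δ₂ ^ n) - w₂) := by
    have h1 : (1-δ₂) * ∑ m ∈ Finset.range n, δ₂ ^ m * (w₁ - ρ m)
        = w₁ * (1 - δ₂ ^ n) - (1-δ₂) * ∑ m ∈ Finset.range n, δ₂ ^ m * ρ m := by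
      rw [hSw]; rw [mul_sub]
      rw [show (1-δ₂) * (w₁ * ∑ m ∈ Finset.range n, δ₂ ^ m)
          = w₁ * ((1-δ₂) * ∑ m ∈ Finset.range n, δ₂ ^ m) by ring, hgeom]
    have h2 := hP1 n
    have h3 : (δ₂ - δ₁) ≥ 0 := by linarith
    calc (1-δ₂) * ((δ₂ - δ₁) * ∑ m ∈ Finset.range n, δ₂ ^ m * (w₁ - ρ m))
        = (δ₂ - δ₁) * ((1-δ₂) * ∑ m ∈ Finset.range n, δ₂ ^ m * (w₁ - ρ m)) := by ring
      _ ≥ (δ₂ - δ₁) * (w₁ * (1 - δ₂ ^ n) - w₂) := by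
          rw [h1]
          exact mul_le_mul_of_nonneg_left (by linarith) h3
  have hp2 : (1-δ₂) * (ε * ∑ m ∈ Finset.range n, δ₂ ^ m) ≤ ε := by
    rw [show (1-δ₂) * (ε * ∑ m ∈ Finset.range n, δ₂ ^ m)
        = ε * ((1-δ₂) * ∑ m ∈ Finset.range n, δ₂ ^ m) by ring, hgeom]
    nlinarith [hpow0 n, hpow1 n]
  have hp3 : (1-δ₂) * (δ₂ ^ n * (W₂ n - W₁ n)) ≥ -(δ₂ ^ n * C) := by
    have hA : -C ≤ W₂ n - W₁ n := by have := hW₂lb n; have := hW₁ub n; linarith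
    have e1 : 0 ≤ (1-δ₂) * δ₂ ^ n := mul_nonneg h1δ₂.le (hpow0 n)
    have e2 := mul_le_mul_of_nonneg_left hA e1
    have e3 : 0 ≤ δ₂ * (δ₂ ^ n * C) := mul_nonneg hδ₂0 (mul_nonneg (hpow0 n) hC0)
    nlinarith [e2, e3]
  -- assemble: (1-δ₂)(w₂ - w₁) ≥ -δ₂^n C + (δ₂-δ₁)(w₁(1-δ₂^n) - w₂) - ε
  rw [hW₁0, hW₂0] at hmul
  have hassem : (1-δ₂) * (w₂ - w₁)
      ≥ -(δ₂ ^ n * C) + (δ₂ - δ₁) * (w₁ * (1 - δ₂ ^ n) - w₂) - ε := by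
    nlinarith [hmul, hp1, hp2, hp3]
  -- replace w₁(1-δ₂^n) ≥ w₁ - δ₂^n C
  have hw1n : w₁ * (1 - δ₂ ^ n) ≥ w₁ - δ₂ ^ n * C := by
    nlinarith [hpow0 n]
  have h3 : (δ₂ - δ₁) ≥ 0 := by linarith
  have hassem2 : (1-δ₂) * (w₂ - w₁)
      ≥ -(δ₂ ^ n * C) + (δ₂ - δ₁) * ((w₁ - δ₂ ^ n * C) - w₂) - ε := by
    have hx : (δ₂-δ₁) * ((w₁ - δ₂ ^ n * C) - w₂) ≤ (δ₂-δ₁) * (w₁ * (1 - δ₂ ^ n) - w₂) :=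
      mul_le_mul_of_nonneg_left (by linarith [hw1n]) h3
    linarith [hassem, hx]
  -- set u := w₂ + δ₂^n C - w₁ ; then u (1-δ₁) ≥ -(ε + δ₂^n C)
  have hu : (w₂ + δ₂ ^ n * C - w₁) * (1 - δ₁) ≥ -(ε + δ₂ ^ n * C) := by
    have e5 : 0 ≤ (1-δ₂) * (δ₂ ^ n * C) :=
      mul_nonneg h1δ₂.le (mul_nonneg (hpow0 n) hC0)
    nlinarith [hassem2, e5]
  -- conclude
  have h5 : (w₁ - (w₂ + δ₂ ^ n * C)) * (1-δ₁) ≤ ε + δ₂ ^ n * C := by nlinarith [hu]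
  have h6 : w₁ - (w₂ + δ₂ ^ n * C) ≤ (ε + δ₂ ^ n * C) / (1-δ₁) := by
    rw [le_div_iff₀ h1δ₁]; exact h5
  linarith [h6]



section Glue
variable {K I : Type*} [Fintype K] [Nonempty K] [DecidableEq K] [Fintype I] [Nonempty I]
variable (M : Matrix K K ℝ) (πM : K → ℝ) (F : (K → ℝ) → K → I → ℝ)

lemma piM_pow {M : Matrix K K ℝ} {πM : K → ℝ} (hπinv : Matrix.vecMul πM M = πM) :
    ∀ m : ℕ, Matrix.vecMul πM (M ^ m) = πM := by
  intro m
  induction m with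
  | zero => rw [pow_zero, Matrix.vecMul_one]
  | succ m ih => rw [pow_succ, ← Matrix.vecMul_vecMul, ih, hπinv]

lemma sum_step_eq (hF : ∀ x ℓ, F x ℓ ∈ stdSimplex ℝ I) (Vd : (K → ℝ) → ℝ)
    {y : K → ℝ} (hy : y ∈ stdSimplex ℝ K) :
    ∑ a, actionProb y (F y) a * Vd (stepPt M πM F y a)
      = ∑ a, actionProb y (F y) a * Vd (Matrix.vecMul (posterior y (F y) a) M) := by
  refine Finset.sum_congr rfl fun a _ => ?_
  by_cases h : actionProb y (F y) a = 0
  · rw [h, zero_mul, zero_mul]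
  · unfold stepPt
    simp only [h, if_false]

lemma stage_WL {ξs : K → (K → ℝ)} {γ : K → ℝ}
    (hM : IsStochastic M) (hπΔ : πM ∈ stdSimplex ℝ K)
    (hF : ∀ x ℓ, F x ℓ ∈ stdSimplex ℝ I)
    (hξs : ∀ k, ξs k ∈ stdSimplex ℝ K)
    (haff : AffineIndependent ℝ ξs)
    (hconv : ∀ ξ ∈ stdSimplex ℝ K, Matrix.vecMul ξ M ∈ convexHull ℝ (Set.range ξs))
    (hγ0 : ∀ i, 0 ≤ γ i) (hγ1 : ∑ i, γ i = 1)
    (hγπ : πM = ∑ i, γ i • ξs i) (hπinv : Matrix.vecMul πM M = πM)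
    (Vd : (K → ℝ) → ℝ)
    (hconc : ∀ lam : K → ℝ, (∀ l, 0 ≤ lam l) → (∑ l, lam l = 1) →
      ∑ l, lam l * Vd (ξs l) ≤ Vd (∑ l, lam l • ξs l)) (m : ℕ) :
    ∑ l, γ l * Vd (ξs l) ≤ ∑ k, γ k * WxV M πM F Vd (ξs k) m := by
  classical
  have hπH : πM ∈ convexHull ℝ (Set.range ξs) := by
    rw [hγπ, ← Finset.centerMass_eq_of_sum_1 Finset.univ ξs hγ1]
    exact Finset.centerMass_mem_convexHull _ (fun i _ => hγ0 i)
      (by rw [hγ1]; norm_num) (fun i _ => Set.mem_range_self i)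
  have hξsH : ∀ k, ξs k ∈ convexHull ℝ (Set.range ξs) :=
    fun k => subset_convexHull ℝ _ (Set.mem_range_self k)
  have happ := weighted_lb haff hγ1 hγπ hconc
    (ι := K × (Fin m → I))
    (fun p => γ p.1 * trajWt M πM F (ξs p.1) m p.2)
    (fun p => trajPt M πM F (ξs p.1) m p.2)
    (fun p => mul_nonneg (hγ0 p.1)
      (trajWt_nonneg M πM F hM hπΔ hF m (ξs p.1) (hξs p.1) p.2))
    (by
      rw [Fintype.sum_prod_type]
      have : ∀ k, ∑ f : Fin m → I, γ k * trajWt M πM F (ξs k) m f = γ k := by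
        intro k
        rw [← Finset.mul_sum, sum_trajWt M πM F hM hπΔ hF m (ξs k) (hξs k), mul_one]
      simp_rw [this]
      exact hγ1)
    (fun p => trajPt_mem_H M πM F hM hπΔ hπH hconv hF m (ξs p.1) (hξs p.1)
      (hξsH p.1) p.2)
    (by
      rw [Fintype.sum_prod_type]
      have hk : ∀ k, ∑ f : Fin m → I,
          (γ k * trajWt M πM F (ξs k) m f) • trajPt M πM F (ξs k) m f
          = γ k • Matrix.vecMul (ξs k) (M ^ m) := by
        intro k
        rw [← traj_bary M πM F hM hπΔ hF m (ξs k) (hξs k), Finset.smul_sum]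
        exact Finset.sum_congr rfl fun f _ => by rw [mul_smul]
      simp_rw [hk]
      rw [← vecMul_sum_smul, ← hγπ, piM_pow hπinv])
  refine le_trans happ (le_of_eq ?_)
  rw [Fintype.sum_prod_type]
  refine Finset.sum_congr rfl fun k _ => ?_
  unfold WxV
  rw [Finset.mul_sum]
  exact Finset.sum_congr rfl fun f _ => by ring

end Glue

theorem markov_chain_game_weighted_value_nondecreasing
    {K I J : Type*} [Fintype K] [Nonempty K] [DecidableEq K]
    [Fintype I] [Nonempty I] [Fintype J] [Nonempty J]
    (M : Matrix K K ℝ) (hM : IsStochastic M)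
    (hirr : ∀ ℓ ℓ' : K, ∃ n : ℕ, 1 ≤ n ∧ 0 < (M ^ n) ℓ ℓ')
    (G : K → I → J → ℝ) (hG : ∀ ℓ i j, 0 ≤ G ℓ i j)
    (C : ℝ) (hC : IsGreatest { x : ℝ | ∃ ℓ i j, x = G ℓ i j } C)
    (V : ℝ → (K → ℝ) → ℝ) (hV : IsGameValueFamily M G C V)
    (πM : K → ℝ) (hπ : πM ∈ stdSimplex ℝ K) (hπinv : Matrix.vecMul πM M = πM)
    (hπuniq : ∀ π' ∈ stdSimplex ℝ K, Matrix.vecMul π' M = π' → π' = πM)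
    (ξs : K → (K → ℝ)) (hξs : ∀ i, ξs i ∈ stdSimplex ℝ K)
    (haff : AffineIndependent ℝ ξs)
    (hconv : ∀ ξ ∈ stdSimplex ℝ K, Matrix.vecMul ξ M ∈ convexHull ℝ (Set.range ξs))
    (γ : K → ℝ) (hγ0 : ∀ i, 0 ≤ γ i) (hγ1 : ∑ i, γ i = 1)
    (hγπ : πM = ∑ i, γ i • ξs i) :
    ∀ δ₁ δ₂ : ℝ, 0 ≤ δ₁ → δ₁ ≤ δ₂ → δ₂ < 1 →
      (∑ i, γ i * V δ₁ (ξs i)) ≤ ∑ i, γ i * V δ₂ (ξs i) := by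
  intro δ₁ δ₂ hδ₁0 hδ₁₂ hδ₂1
  classical
  have hδ₁m : δ₁ ∈ Set.Ico (0:ℝ) 1 := ⟨hδ₁0, lt_of_le_of_lt hδ₁₂ hδ₂1⟩
  have hδ₂m : δ₂ ∈ Set.Ico (0:ℝ) 1 := ⟨le_trans hδ₁0 hδ₁₂, hδ₂1⟩
  have hGC : ∀ ℓ i j, G ℓ i j ≤ C := fun ℓ i j => hC.2 ⟨ℓ, i, j, rfl⟩
  have hC0 : (0:ℝ) ≤ C := by
    obtain ⟨ℓ, i, j, hje⟩ := hC.1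
    rw [hje]; exact hG ℓ i j
  have hVb₁ := (hV δ₁ hδ₁m).1
  have hVeq₁ : ∀ ξ ∈ stdSimplex ℝ K, V δ₁ ξ = sSup (bellSet M G (V δ₁) δ₁ ξ) :=
    (hV δ₁ hδ₁m).2
  have hVb₂ := (hV δ₂ hδ₂m).1
  have hVeq₂ : ∀ ξ ∈ stdSimplex ℝ K, V δ₂ ξ = sSup (bellSet M G (V δ₂) δ₂ ξ) :=
    (hV δ₂ hδ₂m).2
  have hconc₁ : ∀ lam : K → ℝ, (∀ l, 0 ≤ lam l) → (∑ l, lam l = 1) →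
      ∑ l, lam l * V δ₁ (ξs l) ≤ V δ₁ (∑ l, lam l • ξs l) :=
    fun lam h0 h1 => value_concave hM hδ₁m hG hGC hC0 πM hπ hVb₁ hVeq₁ lam h0 h1 ξs hξs
  have hconc₂ : ∀ lam : K → ℝ, (∀ l, 0 ≤ lam l) → (∑ l, lam l = 1) →
      ∑ l, lam l * V δ₂ (ξs l) ≤ V δ₂ (∑ l, lam l • ξs l) :=
    fun lam h0 h1 => value_concave hM hδ₂m hG hGC hC0 πM hπ hVb₂ hVeq₂ lam h0 h1 ξs hξs
  set w₁ := ∑ i, γ i * V δ₁ (ξs i) with hw₁def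
  set w₂ := ∑ i, γ i * V δ₂ (ξs i) with hw₂def
  have hw₁C : w₁ ≤ C := by
    rw [hw₁def]
    calc ∑ i, γ i * V δ₁ (ξs i) ≤ ∑ i, γ i * C :=
          Finset.sum_le_sum fun i _ =>
            mul_le_mul_of_nonneg_left (hVb₁ _ (hξs i)).2 (hγ0 i)
      _ = C := by rw [← Finset.sum_mul, hγ1, one_mul]
  have h1δ₁ : (0:ℝ) < 1 - δ₁ := by
    have := hδ₁m.2; linarith
  refine le_of_forall_pos_le_add ?_
  intro ε0 hε0
  set ε := ε0 * (1 - δ₁) / 2 with hεdef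
  have hε : 0 < ε := by positivity
  -- ε-optimal strategy selection for δ₁
  have hex : ∀ x : K → ℝ, ∃ χ : K → I → ℝ, (∀ ℓ, χ ℓ ∈ stdSimplex ℝ I) ∧
      (x ∈ stdSimplex ℝ K → V δ₁ x ≤ bellExpr M G (V δ₁) δ₁ x χ + ε) := by
    intro x
    by_cases hx : x ∈ stdSimplex ℝ K
    · have heq := hVeq₁ x hx
      have hlt : V δ₁ x - ε < sSup (bellSet M G (V δ₁) δ₁ x) := by
        rw [← heq]; linarith
      obtain ⟨b, hb, hgt⟩ := exists_lt_of_lt_csSup bellSet_nonempty hlt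
      obtain ⟨χ, hχ, rfl⟩ := hb
      exact ⟨χ, hχ, fun _ => by linarith⟩
    · exact ⟨unifStrat K I, unifStrat_mem, fun h => absurd h hx⟩
  choose F hFval hFopt using hex
  have hFv : ∀ x ℓ, F x ℓ ∈ stdSimplex ℝ I := fun x ℓ => hFval x ℓ
  -- pointwise Bellman inequalities in stepPt form
  have hpt₁ : ∀ y ∈ stdSimplex ℝ K, V δ₁ y ≤ (1-δ₁) * onestagePayoff G y (F y)
      + δ₁ * ∑ a, actionProb y (F y) a * V δ₁ (stepPt M πM F y a) + ε := by
    intro y hy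
    have := hFopt y hy
    unfold bellExpr at this
    rw [sum_step_eq M πM F hFv (V δ₁) hy]
    exact this
  have hpt₂ : ∀ y ∈ stdSimplex ℝ K, (1-δ₂) * onestagePayoff G y (F y)
      + δ₂ * ∑ a, actionProb y (F y) a * V δ₂ (stepPt M πM F y a) ≤ V δ₂ y := by
    intro y hy
    rw [hVeq₂ y hy, sum_step_eq M πM F hFv (V δ₂) hy]
    exact le_csSup (bellSet_bddAbove hM hδ₂m hGC hVb₂ hy hC0) ⟨F y, hFv y, rfl⟩
  -- the three sequences
  set W₁s : ℕ → ℝ := fun m => ∑ k, γ k * WxV M πM F (V δ₁) (ξs k) m with hW₁sdef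
  set W₂s : ℕ → ℝ := fun m => ∑ k, γ k * WxV M πM F (V δ₂) (ξs k) m with hW₂sdef
  set ρs : ℕ → ℝ := fun m => ∑ k, γ k * rhoX M πM F G (ξs k) m with hρsdef
  have hW₁0 : W₁s 0 = w₁ := by
    rw [hW₁sdef, hw₁def]
    simp only
    exact Finset.sum_congr rfl fun k _ => by rw [WxV_zero]
  have hW₂0 : W₂s 0 = w₂ := by
    rw [hW₂sdef, hw₂def]
    simp only
    exact Finset.sum_congr rfl fun k _ => by rw [WxV_zero]
  have hW₁L : ∀ m, w₁ ≤ W₁s m := by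
    intro m
    rw [hw₁def]
    exact stage_WL M πM F hM hπ hFv hξs haff hconv hγ0 hγ1 hγπ hπinv (V δ₁) hconc₁ m
  have hWbnd : ∀ (Vd : (K → ℝ) → ℝ), (∀ y ∈ stdSimplex ℝ K, 0 ≤ Vd y ∧ Vd y ≤ C) →
      ∀ m, 0 ≤ ∑ k, γ k * WxV M πM F Vd (ξs k) m ∧
        ∑ k, γ k * WxV M πM F Vd (ξs k) m ≤ C := by
    intro Vd hVb m
    constructor
    · refine Finset.sum_nonneg fun k _ => mul_nonneg (hγ0 k) ?_
      exact (WxV_bounds M πM F Vd hM hπ hFv hVb (hξs k) m).1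
    · calc ∑ k, γ k * WxV M πM F Vd (ξs k) m ≤ ∑ k, γ k * C :=
            Finset.sum_le_sum fun k _ => mul_le_mul_of_nonneg_left
              (WxV_bounds M πM F Vd hM hπ hFv hVb (hξs k) m).2 (hγ0 k)
        _ = C := by rw [← Finset.sum_mul, hγ1, one_mul]
  have hW₂lb : ∀ m, 0 ≤ W₂s m := fun m => (hWbnd (V δ₂) hVb₂ m).1
  have hW₁ub : ∀ m, W₁s m ≤ C := fun m => (hWbnd (V δ₁) hVb₁ m).2
  have hρ0 : ∀ m, 0 ≤ ρs m := by
    intro m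
    refine Finset.sum_nonneg fun k _ => mul_nonneg (hγ0 k) ?_
    exact rhoX_nonneg M πM F G hM hπ hFv hG (hξs k) m
  have hi : ∀ m, W₁s m ≤ (1-δ₁) * ρs m + δ₁ * W₁s (m+1) + ε := by
    intro m
    have hk : ∀ k, γ k * WxV M πM F (V δ₁) (ξs k) m
        ≤ γ k * ((1-δ₁) * rhoX M πM F G (ξs k) m
            + δ₁ * WxV M πM F (V δ₁) (ξs k) (m+1) + ε) := fun k =>
      mul_le_mul_of_nonneg_left
        (stage_ub M πM F (V δ₁) G hM hπ hFv (hξs k) hpt₁ m) (hγ0 k)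
    calc W₁s m ≤ ∑ k, γ k * ((1-δ₁) * rhoX M πM F G (ξs k) m
            + δ₁ * WxV M πM F (V δ₁) (ξs k) (m+1) + ε) := Finset.sum_le_sum fun k _ => hk k
      _ = (1-δ₁) * ρs m + δ₁ * W₁s (m+1) + (∑ k, γ k) * ε := by
          rw [hρsdef, hW₁sdef]
          simp only
          rw [Finset.mul_sum, Finset.mul_sum, Finset.sum_mul, ← Finset.sum_add_distrib,
            ← Finset.sum_add_distrib]
          exact Finset.sum_congr rfl fun k _ => by ring
      _ = (1-δ₁) * ρs m + δ₁ * W₁s (m+1) + ε := by rw [hγ1, one_mul]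
  have hii : ∀ m, (1-δ₂) * ρs m + δ₂ * W₂s (m+1) ≤ W₂s m := by
    intro m
    have hk : ∀ k, γ k * ((1-δ₂) * rhoX M πM F G (ξs k) m
        + δ₂ * WxV M πM F (V δ₂) (ξs k) (m+1))
        ≤ γ k * WxV M πM F (V δ₂) (ξs k) m := fun k =>
      mul_le_mul_of_nonneg_left
        (stage_lb M πM F (V δ₂) G hM hπ hFv (hξs k) hpt₂ m) (hγ0 k)
    calc (1-δ₂) * ρs m + δ₂ * W₂s (m+1)
        = ∑ k, γ k * ((1-δ₂) * rhoX M πM F G (ξs k) m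
            + δ₂ * WxV M πM F (V δ₂) (ξs k) (m+1)) := by
          rw [hρsdef, hW₂sdef]
          simp only
          rw [Finset.mul_sum, Finset.mul_sum, ← Finset.sum_add_distrib]
          exact Finset.sum_congr rfl fun k _ => by ring
      _ ≤ W₂s m := Finset.sum_le_sum fun k _ => hk k
  -- final arithmetic
  have hfin := final_arith δ₁ δ₂ C w₁ w₂ ε W₁s W₂s ρs hδ₁0 hδ₁₂ hδ₂1 hC0 hε
    hW₁0 hW₂0 hW₁L hW₂lb hW₁ub hw₁C hρ0 hi hii
  -- pass to the limit in n
  have hδ₂0 : (0:ℝ) ≤ δ₂ := le_trans hδ₁0 hδ₁₂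
  have hlim : Filter.Tendsto (fun n : ℕ => w₂ + δ₂ ^ n * C + (ε + δ₂ ^ n * C) / (1 - δ₁))
      Filter.atTop (nhds (w₂ + 0 * C + (ε + 0 * C) / (1 - δ₁))) := by
    have hp : Filter.Tendsto (fun n : ℕ => δ₂ ^ n) Filter.atTop (nhds 0) :=
      tendsto_pow_atTop_nhds_zero_of_lt_one hδ₂0 hδ₂1
    exact ((tendsto_const_nhds.add (hp.mul_const C)).add
      (((tendsto_const_nhds.add (hp.mul_const C)).div_const (1 - δ₁))))
  have hlimle : w₁ ≤ w₂ + 0 * C + (ε + 0 * C) / (1 - δ₁) :=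
    ge_of_tendsto' hlim hfin
  have : w₂ + 0 * C + (ε + 0 * C) / (1 - δ₁) = w₂ + ε0 / 2 := by
    rw [hεdef]
    field_simp
    ring
  rw [this] at hlimle
  linarith
end
end
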